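/- arXiv:1103.6239 — 9 statements merged into one kernel-verified Lean document; each statement's English description precedes it below -/
import Mathlib

section
/- If A : X ⇉ X* is a maximally monotone linear relation (its graph is a linear subspace of X × X*), then the annihilator of dom A equals A0, i.e., (dom A)^⊥ = A(0). -/
open NormedSpace

/-- For a maximally monotone linear relation `A : X ⇉ X*`,
the annihilator of `dom A` equals `A 0`. -/
theorem stmt_0 {X : Type*} [NormedAddCommGroup X] [NormedSpace ℝ X] [CompleteSpace X]
    (A : X → Set (StrongDual ℝ X))
    (hlin : ∃ S : Submodule ℝ (X × StrongDual ℝ X),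
      (S : Set (X × StrongDual ℝ X)) = {p : X × StrongDual ℝ X | p.2 ∈ A p.1})
    (hmono : ∀ p ∈ {p : X × StrongDual ℝ X | p.2 ∈ A p.1},
      ∀ q ∈ {p : X × StrongDual ℝ X | p.2 ∈ A p.1}, 0 ≤ (p.2 - q.2) (p.1 - q.1))
    (hmax : ∀ p : X × StrongDual ℝ X,
      (∀ q ∈ {p : X × StrongDual ℝ X | p.2 ∈ A p.1}, 0 ≤ (p.2 - q.2) (p.1 - q.1)) → p.2 ∈ A p.1) :
    {x' : StrongDual ℝ X | ∀ x : X, (A x).Nonempty → x' x = 0} = A 0 := by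
  obtain ⟨S, hS⟩ := hlin
  have hmem : ∀ p : X × StrongDual ℝ X, p ∈ S ↔ p.2 ∈ A p.1 := by
    intro p
    rw [← SetLike.mem_coe, hS]; exact Iff.rfl
  have h0 : (0 : StrongDual ℝ X) ∈ A 0 := (hmem (0, 0)).mp S.zero_mem
  ext x'
  simp only [Set.mem_setOf_eq]
  constructor
  · intro h
    refine hmax (0, x') ?_
    intro q hq
    have hq' : q.2 ∈ A q.1 := hq
    have h1 : 0 ≤ (q.2 - (0 : StrongDual ℝ X)) (q.1 - 0) :=
      hmono q hq (0, 0) h0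
    have h2 : x' q.1 = 0 := h q.1 ⟨q.2, hq'⟩
    simp only [sub_zero] at h1
    simp only [ContinuousLinearMap.sub_apply, map_sub]
    simp [h2]
    linarith
  · intro hx' x hx
    obtain ⟨z, hz⟩ := hx
    have key : ∀ t : ℝ, 0 ≤ z x + t * x' x := by
      intro t
      have hmemS : ((x, z) + t • ((0 : X), x')) ∈ S :=
        S.add_mem ((hmem (x, z)).mpr hz) (S.smul_mem t ((hmem (0, x')).mpr hx'))
      have hA : (z + t • x') ∈ A x := by
        have := (hmem _).mp hmemS
        simpa using this
      have := hmono (x, z + t • x') hA (0, 0) h0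
      simpa using this
    by_contra hne
    rcases lt_or_gt_of_ne hne with hlt | hgt
    · have := key ((-(z x) - 1) / (x' x))
      rw [div_mul_cancel₀ _ (ne_of_lt hlt)] at this
      linarith
    · have := key ((-(z x) - 1) / (x' x))
      rw [div_mul_cancel₀ _ (ne_of_gt hgt)] at this
      linarith
end

section
/- If A : X ⇉ X* is a maximally monotone linear relation, then (dom A)^⊥ = A(0) = A*(0) = (dom A*)_⊥, where A* is the adjoint relation. -/
open NormedSpace

/-- For a maximally monotone linear relation `A : X ⇉ X*`,
`(dom A)^⊥ = A 0 = A* 0 = (dom A*)_⊥`, where the adjoint `A* : X** ⇉ X*` has graph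
`{(x**, x*) : ⟨x*, a⟩ = ⟨x**, a*⟩ for all (a, a*) ∈ gra A}`. -/
theorem stmt_2 {X : Type*} [NormedAddCommGroup X] [NormedSpace ℝ X] [CompleteSpace X]
    (A : X → Set (StrongDual ℝ X))
    (hlin : ∃ S : Submodule ℝ (X × StrongDual ℝ X),
      (S : Set (X × StrongDual ℝ X)) = {p : X × StrongDual ℝ X | p.2 ∈ A p.1})
    (hmono : ∀ p ∈ {p : X × StrongDual ℝ X | p.2 ∈ A p.1},
      ∀ q ∈ {p : X × StrongDual ℝ X | p.2 ∈ A p.1}, 0 ≤ (p.2 - q.2) (p.1 - q.1))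
    (hmax : ∀ p : X × StrongDual ℝ X,
      (∀ q ∈ {p : X × StrongDual ℝ X | p.2 ∈ A p.1}, 0 ≤ (p.2 - q.2) (p.1 - q.1)) → p.2 ∈ A p.1) :
    {x' : StrongDual ℝ X | ∀ x : X, (A x).Nonempty → x' x = 0} = A 0 ∧
    A 0 = {x' : StrongDual ℝ X |
      ((0 : StrongDual ℝ (StrongDual ℝ X)), x') ∈
        {q : StrongDual ℝ (StrongDual ℝ X) × StrongDual ℝ X |
          ∀ p ∈ {p : X × StrongDual ℝ X | p.2 ∈ A p.1}, q.2 p.1 = q.1 p.2}} ∧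
    {x' : StrongDual ℝ X |
      ((0 : StrongDual ℝ (StrongDual ℝ X)), x') ∈
        {q : StrongDual ℝ (StrongDual ℝ X) × StrongDual ℝ X |
          ∀ p ∈ {p : X × StrongDual ℝ X | p.2 ∈ A p.1}, q.2 p.1 = q.1 p.2}} =
      {x' : StrongDual ℝ X | ∀ F : StrongDual ℝ (StrongDual ℝ X),
        (∃ y' : StrongDual ℝ X, (F, y') ∈
          {q : StrongDual ℝ (StrongDual ℝ X) × StrongDual ℝ X |
            ∀ p ∈ {p : X × StrongDual ℝ X | p.2 ∈ A p.1}, q.2 p.1 = q.1 p.2}) → F x' = 0} := by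
  obtain ⟨S, hS⟩ := hlin
  set G : Set (X × StrongDual ℝ X) := {p : X × StrongDual ℝ X | p.2 ∈ A p.1} with hGdef
  have h00 : ((0 : X), (0 : StrongDual ℝ X)) ∈ G := by
    rw [← hS]; exact S.zero_mem
  -- Part 1: (dom A)^⊥ = A 0
  have part1 : {x' : StrongDual ℝ X | ∀ x : X, (A x).Nonempty → x' x = 0} = A 0 := by
    ext x'
    simp only [Set.mem_setOf_eq]
    constructor
    · intro hx'
      have : ((0 : X), x').2 ∈ A ((0 : X), x').1 := by
        refine hmax ((0 : X), x') ?_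
        intro q hq
        have h1 : x' q.1 = 0 := hx' q.1 ⟨q.2, hq⟩
        have h2 : 0 ≤ q.2 q.1 := by
          have := hmono q hq ((0 : X), (0 : StrongDual ℝ X)) h00
          simpa using this
        simp only [ContinuousLinearMap.sub_apply, map_sub, map_zero, zero_sub, map_neg, h1]
        linarith
      simpa using this
    · rintro hx' x ⟨u, hu⟩
      have hxS : (x, u) ∈ S := by
        show (x, u) ∈ (S : Set (X × StrongDual ℝ X)); rw [hS]; exact hu
      have h0S : ((0 : X), x') ∈ S := by
        show ((0 : X), x') ∈ (S : Set (X × StrongDual ℝ X)); rw [hS]; exact hx'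
      have key : ∀ t : ℝ, 0 ≤ u x + t * x' x := by
        intro t
        have hmem : (x, u + t • x') ∈ G := by
          have h2 : ((x, u) + t • ((0 : X), x') : X × StrongDual ℝ X) ∈ (S : Set (X × StrongDual ℝ X)) :=
            S.add_mem hxS (S.smul_mem t h0S)
          rw [hS] at h2
          simpa [Prod.ext_iff] using h2
        have := hmono (x, u + t • x') hmem ((0 : X), (0 : StrongDual ℝ X)) h00
        simpa [mul_comm] using this
      by_contra hne
      have h1 := key ((-(u x) - 1) / (x' x))
      rw [div_mul_cancel₀ _ hne] at h1
      linarith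
  -- Part 2: A 0 = A* 0
  have part2 : A 0 = {x' : StrongDual ℝ X |
      ((0 : StrongDual ℝ (StrongDual ℝ X)), x') ∈
        {q : StrongDual ℝ (StrongDual ℝ X) × StrongDual ℝ X |
          ∀ p ∈ {p : X × StrongDual ℝ X | p.2 ∈ A p.1}, q.2 p.1 = q.1 p.2}} := by
    rw [← part1]
    ext x'
    simp only [Set.mem_setOf_eq, ContinuousLinearMap.zero_apply]
    constructor
    · intro h p hp
      exact h p.1 ⟨p.2, hp⟩
    · rintro h x ⟨u, hu⟩
      exact h (x, u) hu
  refine ⟨part1, part2, ?_⟩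
  -- Part 3: A* 0 = (dom A*)_⊥
  ext x'
  simp only [Set.mem_setOf_eq, ContinuousLinearMap.zero_apply]
  constructor
  · rintro hx' F ⟨y', hy⟩
    have h0 : ((0 : X), x') ∈ G := by
      have : x' ∈ A 0 := by
        rw [part2]
        intro p hp
        simpa using hx' p hp
      exact this
    have := hy ((0 : X), x') h0
    simpa using this.symm
  · intro h
    suffices h0 : ((0 : X), x') ∈ G by
      intro p hp
      have hx' : x' ∈ A 0 := h0
      rw [← part1] at hx'
      exact hx' p.1 ⟨p.2, hp⟩
    by_contra hnot
    -- G is closed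
    have hGclosed : IsClosed G := by
      have : closure G ⊆ G := by
        intro p hp
        refine hmax p ?_
        intro q hq
        have hcont : Continuous fun r : X × StrongDual ℝ X => (r.2 - q.2) (r.1 - q.1) :=
          (isBoundedBilinearMap_apply.continuous).comp
            ((continuous_snd.sub continuous_const).prodMk
              (continuous_fst.sub continuous_const))
        have hclosed : IsClosed {r : X × StrongDual ℝ X | 0 ≤ (r.2 - q.2) (r.1 - q.1)} :=
          isClosed_le continuous_const hcont
        have hsub : G ⊆ {r : X × StrongDual ℝ X | 0 ≤ (r.2 - q.2) (r.1 - q.1)} :=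
          fun r hr => hmono r hr q hq
        exact (closure_minimal hsub hclosed) hp
      exact isClosed_of_closure_subset this
    have hGconvex : Convex ℝ G := by
      rw [← hS]; exact S.convex
    obtain ⟨f, u, hfx, hfb⟩ :=
      geometric_hahn_banach_point_closed hGconvex hGclosed hnot
    -- f vanishes on G
    have hf0 : ∀ p ∈ G, f p = 0 := by
      intro p hp
      by_contra hne
      have hmem : ((u - 1) / f p) • p ∈ G := by
        have hpS : p ∈ S := by
          show p ∈ (S : Set (X × StrongDual ℝ X)); rw [hS]; exact hp
        have h3 : ((u - 1) / f p) • p ∈ (S : Set (X × StrongDual ℝ X)) :=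
          S.smul_mem ((u - 1) / f p) hpS
        rw [hS] at h3
        exact h3
      have := hfb _ hmem
      rw [map_smul, smul_eq_mul, div_mul_cancel₀ _ hne] at this
      linarith
    have hu0 : u < 0 := by
      have := hfb _ h00
      rw [show ((0 : X), (0 : StrongDual ℝ X)) = 0 from rfl, map_zero] at this
      exact this
    -- build the adjoint element
    set Φ : StrongDual ℝ (StrongDual ℝ X) := f.comp (ContinuousLinearMap.inr ℝ X (StrongDual ℝ X)) with hΦ
    set y' : StrongDual ℝ X := f.comp (ContinuousLinearMap.inl ℝ X (StrongDual ℝ X)) with hy'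
    have hsplit : ∀ p : X × StrongDual ℝ X, f p = y' p.1 + Φ p.2 := by
      intro p
      have : p = ((p.1, 0) : X × StrongDual ℝ X) + (0, p.2) := by simp
      rw [this, map_add]
      simp [hy', hΦ]
    have hwit : ∀ p ∈ G, y' p.1 = (-Φ) p.2 := by
      intro p hp
      have := hf0 p hp
      rw [hsplit p] at this
      simp only [ContinuousLinearMap.neg_apply]
      linarith
    have hF := h (-Φ) ⟨y', hwit⟩
    have hΦx : Φ x' = 0 := by
      simpa using hF
    have : f ((0 : X), x') = 0 := by
      rw [hsplit]
      simp [hΦx, hy', show ((0 : X), (0 : StrongDual ℝ X)) = 0 from rfl]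
    linarith
end

section
/- If A : X ⇉ X* is a monotone operator whose graph is a nonempty convex subset of X × X*, then the function g(x, x*) = ⟨x, x*⟩ + ι_{gra A}(x, x*) is proper and convex on X × X*. -/
open NormedSpace
open scoped Classical

/-- The function `g(x,x*) = ⟨x,x*⟩ + ι_{gra A}(x,x*)` (with values in `EReal`). -/
noncomputable def stmt7g {X : Type*} [NormedAddCommGroup X] [NormedSpace ℝ X]
    (A : X → Set (StrongDual ℝ X)) : X × StrongDual ℝ X → EReal :=
  fun p => if p.2 ∈ A p.1 then ((p.2 p.1 : ℝ) : EReal) else ⊤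

/-- If `A : X ⇉ X*` is monotone with nonempty convex graph, then
`g(x,x*) = ⟨x,x*⟩ + ι_{gra A}(x,x*)` is proper and convex. -/
theorem stmt_7 {X : Type*} [NormedAddCommGroup X] [NormedSpace ℝ X]
    (A : X → Set (StrongDual ℝ X))
    (hne : {p : X × StrongDual ℝ X | p.2 ∈ A p.1}.Nonempty)
    (hconv : Convex ℝ {p : X × StrongDual ℝ X | p.2 ∈ A p.1})
    (hmono : ∀ p ∈ {p : X × StrongDual ℝ X | p.2 ∈ A p.1},
      ∀ q ∈ {p : X × StrongDual ℝ X | p.2 ∈ A p.1}, 0 ≤ (p.2 - q.2) (p.1 - q.1)) :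
    (∃ p, stmt7g A p ≠ ⊤) ∧ (∀ p, stmt7g A p ≠ ⊥) ∧
    (∀ p q : X × StrongDual ℝ X, ∀ a b : ℝ, 0 ≤ a → 0 ≤ b → a + b = 1 →
      stmt7g A (a • p + b • q) ≤ (a : EReal) * stmt7g A p + (b : EReal) * stmt7g A q) := by
  refine ⟨?_, ?_, ?_⟩
  · obtain ⟨p, hp⟩ := hne
    exact ⟨p, by simp only [stmt7g]; rw [if_pos (Set.mem_setOf_eq ▸ hp)]; exact EReal.coe_ne_top _⟩
  · intro p
    unfold stmt7g
    split <;> simp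
  · intro p q a b ha hb hab
    rcases eq_or_lt_of_le ha with ha0 | ha0
    · have hb1 : b = 1 := by linarith
      subst hb1; rw [← ha0]
      simp
    rcases eq_or_lt_of_le hb with hb0 | hb0
    · have ha1 : a = 1 := by linarith
      subst ha1; rw [← hb0]
      simp
    by_cases hp : p.2 ∈ A p.1
    · by_cases hq : q.2 ∈ A q.1
      · have hmem : (a • p + b • q).2 ∈ A (a • p + b • q).1 := hconv hp hq ha hb hab
        unfold stmt7g
        rw [if_pos hp, if_pos hq, if_pos hmem]
        rw [← EReal.coe_mul, ← EReal.coe_mul, ← EReal.coe_add, EReal.coe_le_coe_iff]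
        have hm := hmono p hp q hq
        simp only [ContinuousLinearMap.sub_apply, map_sub] at hm
        have key : ((a • p + b • q).2) ((a • p + b • q).1)
            = a * p.2 p.1 + b * q.2 q.1 - a * b * (p.2 p.1 - p.2 q.1 - (q.2 p.1 - q.2 q.1)) := by
          simp only [Prod.fst_add, Prod.snd_add, Prod.smul_fst, Prod.smul_snd,
            ContinuousLinearMap.add_apply, ContinuousLinearMap.coe_smul',
            Pi.smul_apply, map_add, map_smul, smul_eq_mul]
          linear_combination (a * p.2 p.1 + b * q.2 q.1) * hab
        rw [key]
        nlinarith [mul_pos ha0 hb0]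
      · have h : stmt7g A q = ⊤ := by simp [stmt7g, hq]
        rw [h, EReal.mul_top_of_pos (EReal.coe_pos.mpr hb0)]
        have : (a : EReal) * stmt7g A p ≠ ⊥ := by
          rw [show stmt7g A p = ((p.2 p.1 : ℝ) : EReal) from by simp [stmt7g, hp],
            ← EReal.coe_mul]
          exact EReal.coe_ne_bot _
        rw [EReal.add_top_of_ne_bot this]
        exact le_top
    · have h : stmt7g A p = ⊤ := by simp [stmt7g, hp]
      rw [h, EReal.mul_top_of_pos (EReal.coe_pos.mpr ha0)]
      have : (b : EReal) * stmt7g A q ≠ ⊥ := by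
        by_cases hq : q.2 ∈ A q.1
        · rw [show stmt7g A q = ((q.2 q.1 : ℝ) : EReal) from by simp [stmt7g, hq],
            ← EReal.coe_mul]
          exact EReal.coe_ne_bot _
        · rw [show stmt7g A q = ⊤ from by simp [stmt7g, hq],
            EReal.mul_top_of_pos (EReal.coe_pos.mpr hb0)]
          simp
      rw [EReal.top_add_of_ne_bot this]
      exact le_top
end

section
/- If A : X ⇉ X* is a maximally monotone linear relation of type (NI), then its adjoint A* is monotone, i.e., ⟨x**, x*⟩ ≥ 0 for every (x**, x*) ∈ gra A*. -/
open NormedSpace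

/-- If a maximally monotone linear relation `A : X ⇉ X*` is of type (NI),
then its adjoint `A*` is monotone: `⟨x**, x*⟩ ≥ 0` on `gra A*`. -/
theorem stmt_8 {X : Type*} [NormedAddCommGroup X] [NormedSpace ℝ X] [CompleteSpace X]
    (A : X → Set (StrongDual ℝ X))
    (hlin : ∃ S : Submodule ℝ (X × StrongDual ℝ X),
      (S : Set (X × StrongDual ℝ X)) = {p : X × StrongDual ℝ X | p.2 ∈ A p.1})
    (hmono : ∀ p ∈ {p : X × StrongDual ℝ X | p.2 ∈ A p.1},
      ∀ q ∈ {p : X × StrongDual ℝ X | p.2 ∈ A p.1}, 0 ≤ (p.2 - q.2) (p.1 - q.1))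
    (hmax : ∀ p : X × StrongDual ℝ X,
      (∀ q ∈ {p : X × StrongDual ℝ X | p.2 ∈ A p.1}, 0 ≤ (p.2 - q.2) (p.1 - q.1)) → p.2 ∈ A p.1)
    (hNI : ∀ (x'' : StrongDual ℝ (StrongDual ℝ X)) (x' : StrongDual ℝ X),
      ((x'' x' : ℝ) : EReal) ≤
        ⨆ p ∈ {p : X × StrongDual ℝ X | p.2 ∈ A p.1},
          ((x' p.1 + x'' p.2 - p.2 p.1 : ℝ) : EReal)) :
    ∀ q : StrongDual ℝ (StrongDual ℝ X) × StrongDual ℝ X,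
      (∀ p ∈ {p : X × StrongDual ℝ X | p.2 ∈ A p.1}, q.2 p.1 = q.1 p.2) → 0 ≤ q.1 q.2 := by
  intro q hq
  obtain ⟨S, hS⟩ := hlin
  have h0 : (0 : X × StrongDual ℝ X) ∈ {p : X × StrongDual ℝ X | p.2 ∈ A p.1} := by
    rw [← hS]; exact S.zero_mem
  have key := hNI q.1 (-q.2)
  have hsup : (⨆ p ∈ {p : X × StrongDual ℝ X | p.2 ∈ A p.1},
      (((-q.2) p.1 + q.1 p.2 - p.2 p.1 : ℝ) : EReal)) ≤ (0 : EReal) := by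
    refine iSup₂_le fun p hp => ?_
    have hm := hmono p hp 0 h0
    simp only [Prod.fst_zero, Prod.snd_zero, sub_zero] at hm
    have : (-q.2) p.1 + q.1 p.2 - p.2 p.1 = -(p.2 p.1) := by
      have := hq p hp
      simp [this]
    rw [this]
    exact_mod_cast neg_nonpos.mpr hm
  have := key.trans hsup
  have h1 : q.1 (-q.2) ≤ 0 := by exact_mod_cast this
  have h2 : q.1 (-q.2) = -(q.1 q.2) := by simp
  linarith [h2 ▸ h1]
end

section
/- Let A : X ⇉ X* be a maximally monotone linear relation and let (x**₀, x*₀) ∈ gra A* with ⟨x**₀, x*₀⟩ ≠ 0. Then there exists a₀ ∈ dom A with ⟨x*₀, a₀⟩ < 0. -/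
open NormedSpace

/-- If `A : X ⇉ X*` is a maximally monotone linear relation and
`(x**₀, x*₀) ∈ gra A*` with `⟨x**₀, x*₀⟩ ≠ 0`, then there is `a₀ ∈ dom A`
with `⟨x*₀, a₀⟩ < 0`. -/
theorem stmt_11 {X : Type*} [NormedAddCommGroup X] [NormedSpace ℝ X] [CompleteSpace X]
    (A : X → Set (StrongDual ℝ X))
    (hlin : ∃ S : Submodule ℝ (X × StrongDual ℝ X),
      (S : Set (X × StrongDual ℝ X)) = {p : X × StrongDual ℝ X | p.2 ∈ A p.1})
    (hmono : ∀ p ∈ {p : X × StrongDual ℝ X | p.2 ∈ A p.1},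
      ∀ q ∈ {p : X × StrongDual ℝ X | p.2 ∈ A p.1}, 0 ≤ (p.2 - q.2) (p.1 - q.1))
    (hmax : ∀ p : X × StrongDual ℝ X,
      (∀ q ∈ {p : X × StrongDual ℝ X | p.2 ∈ A p.1}, 0 ≤ (p.2 - q.2) (p.1 - q.1)) → p.2 ∈ A p.1)
    (x''₀ : StrongDual ℝ (StrongDual ℝ X)) (x'₀ : StrongDual ℝ X)
    (hadj : ∀ p ∈ {p : X × StrongDual ℝ X | p.2 ∈ A p.1}, x'₀ p.1 = x''₀ p.2)
    (hne : x''₀ x'₀ ≠ 0) :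
    ∃ a₀ : X, (A a₀).Nonempty ∧ x'₀ a₀ < 0 := by
  obtain ⟨S, hS⟩ := hlin
  have hmem : ∀ p : X × StrongDual ℝ X, p ∈ S ↔ p.2 ∈ A p.1 := by
    intro p
    have : p ∈ S ↔ p ∈ (S : Set (X × StrongDual ℝ X)) := Iff.rfl
    rw [this, hS]; rfl
  have h00 : (0 : StrongDual ℝ X) ∈ A 0 := (hmem 0).mp S.zero_mem
  by_cases hcase : ∃ a : X, ∃ x' : StrongDual ℝ X, x' ∈ A a ∧ x'₀ a ≠ 0
  · obtain ⟨a, x', hx', hane⟩ := hcase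
    rcases lt_or_gt_of_ne hane with hlt | hgt
    · exact ⟨a, ⟨x', hx'⟩, hlt⟩
    · have hneg : (-(a, x') : X × StrongDual ℝ X) ∈ S :=
        S.neg_mem ((hmem (a, x')).mpr hx')
      have : -x' ∈ A (-a) := (hmem (-(a, x'))).mp hneg
      exact ⟨-a, ⟨-x', this⟩, by simpa using neg_neg_iff_pos.mpr hgt⟩
  · exfalso
    push_neg at hcase
    have hmem0 : x'₀ ∈ A 0 := by
      apply hmax (0, x'₀)
      intro q hq
      have h1 : x'₀ q.1 = 0 := hcase q.1 q.2 hq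
      have h2 : 0 ≤ q.2 q.1 := by
        have := hmono q hq (0, 0) h00
        simpa using this
      simp [h1]
      linarith
    have := hadj (0, x'₀) hmem0
    simp at this
    exact hne this.symm
end

section
/- Let A : X ⇉ X* be a maximally monotone linear relation and F(x, x*) = ⟨x, x*⟩ + ι_{gra A}(x, x*). Then for (x**, x*) ∈ X** × X*: F*(x*, −x**) = 0 if and only if (x**, x*) ∈ gra A*, where F* is the Fenchel conjugate on X* × X** and (gra A)^⊥ defines the adjoint. Moreover F*(x*, −x**) ∈ {0, +∞} is false in general, but F*(x*, −x**) = 0 exactly characterizes membership in gra A*. -/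
open NormedSpace

/-- Let `A : X ⇉ X*` be a maximally monotone linear relation and
`F(x,x*) = ⟨x,x*⟩ + ι_{gra A}(x,x*)`. Then for `(x**, x*) ∈ X** × X*`,
`F*(x*, −x**) = sup_{(a,a*) ∈ gra A} (⟨a,x*⟩ − ⟨a*,x**⟩ − ⟨a,a*⟩) = 0`
if and only if `(x**, x*) ∈ gra A*`. -/
theorem stmt_13 {X : Type*} [NormedAddCommGroup X] [NormedSpace ℝ X] [CompleteSpace X]
    (A : X → Set (StrongDual ℝ X))
    (hlin : ∃ S : Submodule ℝ (X × StrongDual ℝ X),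
      (S : Set (X × StrongDual ℝ X)) = {p : X × StrongDual ℝ X | p.2 ∈ A p.1})
    (hmono : ∀ p ∈ {p : X × StrongDual ℝ X | p.2 ∈ A p.1},
      ∀ q ∈ {p : X × StrongDual ℝ X | p.2 ∈ A p.1}, 0 ≤ (p.2 - q.2) (p.1 - q.1))
    (hmax : ∀ p : X × StrongDual ℝ X,
      (∀ q ∈ {p : X × StrongDual ℝ X | p.2 ∈ A p.1}, 0 ≤ (p.2 - q.2) (p.1 - q.1)) → p.2 ∈ A p.1) :
    ∀ (x'' : StrongDual ℝ (StrongDual ℝ X)) (x' : StrongDual ℝ X),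
      (⨆ p ∈ {p : X × StrongDual ℝ X | p.2 ∈ A p.1},
        ((x' p.1 - x'' p.2 - p.2 p.1 : ℝ) : EReal)) = 0 ↔
      (∀ p ∈ {p : X × StrongDual ℝ X | p.2 ∈ A p.1}, x' p.1 = x'' p.2) := by
  intro x'' x'
  obtain ⟨S, hS⟩ := hlin
  have h0 : ((0, 0) : X × StrongDual ℝ X) ∈ {p : X × StrongDual ℝ X | p.2 ∈ A p.1} := by
    rw [← hS]; exact S.zero_mem
  -- positivity of ⟨a*, a⟩ on the graph
  have hd : ∀ p ∈ {p : X × StrongDual ℝ X | p.2 ∈ A p.1}, (0:ℝ) ≤ p.2 p.1 := by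
    intro p hp
    have := hmono p hp (0, 0) h0
    simpa using this
  have hsm : ∀ (t : ℝ), ∀ p ∈ {p : X × StrongDual ℝ X | p.2 ∈ A p.1},
      t • p ∈ {p : X × StrongDual ℝ X | p.2 ∈ A p.1} := by
    intro t p hp
    rw [← hS] at hp ⊢
    exact S.smul_mem t hp
  constructor
  · intro hsup p hp
    set c : ℝ := x' p.1 - x'' p.2 with hc
    set d : ℝ := p.2 p.1 with hdp
    have hd0 : (0:ℝ) ≤ d := hd p hp
    have key : ∀ t : ℝ, t * c - t ^ 2 * d ≤ 0 := by
      intro t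
      have hmem := hsm t p hp
      have hle : ((x' (t • p).1 - x'' (t • p).2 - (t • p).2 (t • p).1 : ℝ) : EReal) ≤ 0 := by
        rw [← hsup]
        exact le_iSup₂ (f := fun (q : X × StrongDual ℝ X) (_ : q ∈ _) =>
          ((x' q.1 - x'' q.2 - q.2 q.1 : ℝ) : EReal)) (t • p) hmem
      have hle' : (x' (t • p).1 - x'' (t • p).2 - (t • p).2 (t • p).1 : ℝ) ≤ 0 := by
        exact_mod_cast hle
      have : x' (t • p).1 - x'' (t • p).2 - (t • p).2 (t • p).1
          = t * c - t ^ 2 * d := by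
        simp only [Prod.smul_fst, Prod.smul_snd, map_smul, smul_eq_mul,
          ContinuousLinearMap.smul_apply]
        ring
      linarith [this ▸ hle']
    -- conclude c = 0
    have hceq : c = 0 := by
      rcases eq_or_lt_of_le hd0 with h | h
      · have k1 := key 1
        have k2 := key (-1)
        rw [← h] at k1 k2
        nlinarith [k1, k2]
      · have h1 := key (c / (2 * d))
        have e : c / (2 * d) * c - (c / (2 * d)) ^ 2 * d = c ^ 2 / (4 * d) := by
          field_simp
          ring
        rw [e] at h1
        have h5 : c ^ 2 ≤ 0 := by
          have h6 := mul_nonpos_of_nonpos_of_nonneg h1 (by positivity : (0:ℝ) ≤ 4 * d)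
          rwa [div_mul_cancel₀] at h6
          positivity
        nlinarith [sq_nonneg c]
    linarith [hceq, hc ▸ hceq]
  · intro hadj
    apply le_antisymm
    · apply iSup₂_le
      intro p hp
      have h1 : x' p.1 - x'' p.2 - p.2 p.1 = -(p.2 p.1) := by
        rw [hadj p hp]; ring
      rw [h1]
      have : (0:EReal) = ((0:ℝ) : EReal) := rfl
      rw [this, EReal.coe_le_coe_iff]
      linarith [hd p hp]
    · have := le_iSup₂ (f := fun (q : X × StrongDual ℝ X) (_ : q ∈ _) =>
        ((x' q.1 - x'' q.2 - q.2 q.1 : ℝ) : EReal)) ((0,0) : X × StrongDual ℝ X) h0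
      simpa using this
end

section
/- Let f : X → ]−∞,+∞] be proper, lsc, convex, let ε > 0, β > 0, x₀ ∈ dom f and x*₀ ∈ ∂_ε f(x₀). Then there exist x_ε ∈ X and x*_ε ∈ X* with x*_ε ∈ ∂f(x_ε), ‖x_ε − x₀‖ + β|⟨x_ε − x₀, x*₀⟩| ≤ √ε, ‖x*_ε − x*₀‖ ≤ √ε(1 + β‖x*₀‖), and |⟨x_ε − x₀, x*_ε⟩| ≤ ε + √ε/β. -/
open NormedSpace Filter Topology

private lemma toReal_add_real (x : EReal) (hx : x ≠ ⊥) (hx2 : x ≠ ⊤) (c : ℝ) :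
    (x + (c : EReal)).toReal = x.toReal + c := by
  lift x to ℝ using ⟨hx2, hx⟩
  norm_cast

private lemma ekeland_aux {X : Type*} [NormedAddCommGroup X] [CompleteSpace X]
    (h : X → EReal) (hnb : ∀ y, h y ≠ ⊥)
    (D : X → X → ℝ)
    (D_nonneg : ∀ u v, 0 ≤ D u v) (D_self : ∀ u, D u u = 0)
    (D_tri : ∀ u v w, D u w ≤ D u v + D v w)
    (D_norm : ∀ u v, ‖u - v‖ ≤ D u v)
    (D_cont : ∀ v, Continuous fun u => D u v)
    (hlsch : ∀ (x : X) (b : ℝ), (b : EReal) < h x → ∀ᶠ y in nhds x, (b : EReal) < h y)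
    (m : ℝ) (h_lb : ∀ y, (m : EReal) ≤ h y)
    (lam : ℝ) (hlam : 0 < lam)
    (x₀ : X) (hx₀ : h x₀ ≠ ⊤) :
    ∃ xb : X, h xb ≠ ⊤ ∧ (h xb).toReal + lam * D xb x₀ ≤ (h x₀).toReal ∧
      ∀ y : X, h xb ≤ h y + ((lam * D y xb : ℝ) : EReal) := by
  classical
  set S : X → Set X := fun u => {z | h z + ((lam * D z u : ℝ) : EReal) ≤ h u} with hSdef
  have mem_self : ∀ u, u ∈ S u := fun u => by simp [hSdef, D_self u]
  have hfin : ∀ u z, h u ≠ ⊤ → z ∈ S u → h z ≠ ⊤ := by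
    intro u z hu hz htop
    rw [Set.mem_setOf_eq, htop, EReal.top_add_of_ne_bot (EReal.coe_ne_bot _)] at hz
    exact hu (top_le_iff.mp hz)
  have hreal : ∀ u z, h u ≠ ⊤ → z ∈ S u → (h z).toReal + lam * D z u ≤ (h u).toReal := by
    intro u z hu hz
    have hzt := hfin u z hu hz
    have hzb : h z + ((lam * D z u : ℝ) : EReal) ≠ ⊥ := by
      rw [Ne, EReal.add_eq_bot_iff]; push_neg; exact ⟨hnb z, EReal.coe_ne_bot _⟩
    have h2 := EReal.toReal_le_toReal hz hzb hu
    rwa [toReal_add_real _ (hnb z) hzt] at h2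
  have hm : ∀ y, h y ≠ ⊤ → m ≤ (h y).toReal := by
    intro y hy
    have := EReal.toReal_le_toReal (h_lb y) (EReal.coe_ne_bot m) hy
    simpa using this
  have step : ∀ (n : ℕ) (u : X), h u ≠ ⊤ →
      ∃ z, z ∈ S u ∧ ∀ w ∈ S u, (h z).toReal ≤ (h w).toReal + (1/2 : ℝ)^n := by
    intro n u hu
    have hne : ((fun z => (h z).toReal) '' S u).Nonempty := ⟨_, ⟨u, mem_self u, rfl⟩⟩
    have hbdd : BddBelow ((fun z => (h z).toReal) '' S u) :=
      ⟨m, by rintro _ ⟨z, hzS, rfl⟩; exact hm z (hfin u z hu hzS)⟩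
    have hlt : sInf ((fun z => (h z).toReal) '' S u) <
        sInf ((fun z => (h z).toReal) '' S u) + (1/2 : ℝ)^n :=
      lt_add_of_pos_right _ (by positivity)
    obtain ⟨_, ⟨z, hzS, rfl⟩, hz⟩ := exists_lt_of_csInf_lt hne hlt
    exact ⟨z, hzS, fun w hw => hz.le.trans (add_le_add_left (csInf_le hbdd ⟨w, hw, rfl⟩) _)⟩
  set F : ℕ → X → X := fun n u => if hu : h u ≠ ⊤ then (step n u hu).choose else u with hFdef
  set seq : ℕ → X := fun n => Nat.rec x₀ F n with hseqdef
  have hseqS : ∀ n, seq (n+1) = F n (seq n) := fun n => rfl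
  have hprop : ∀ n, h (seq n) ≠ ⊤ := by
    intro n
    induction n with
    | zero => exact hx₀
    | succ n ih =>
      have e : seq (n+1) = (step n (seq n) ih).choose := by rw [hseqS n, hFdef]; exact dif_pos ih
      rw [e]
      exact hfin _ _ ih (step n (seq n) ih).choose_spec.1
  have hchoose : ∀ n, seq (n+1) ∈ S (seq n) ∧
      ∀ w ∈ S (seq n), (h (seq (n+1))).toReal ≤ (h w).toReal + (1/2 : ℝ)^n := by
    intro n
    have e : seq (n+1) = (step n (seq n) (hprop n)).choose := by
      rw [hseqS n, hFdef]; exact dif_pos (hprop n)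
    rw [e]
    exact (step n (seq n) (hprop n)).choose_spec
  set a : ℕ → ℝ := fun n => (h (seq n)).toReal with hadef
  have adec : ∀ n, a (n+1) + lam * D (seq (n+1)) (seq n) ≤ a n :=
    fun n => hreal _ _ (hprop n) (hchoose n).1
  have amono : ∀ n, a (n+1) ≤ a n := by
    intro n
    have h1 := adec n
    have h2 : 0 ≤ lam * D (seq (n+1)) (seq n) := mul_nonneg hlam.le (D_nonneg _ _)
    linarith
  have alb : ∀ n, m ≤ a n := fun n => hm _ (hprop n)
  set A : ℝ := ⨅ n, a n with hAdef
  have habdd : BddBelow (Set.range a) := ⟨m, by rintro _ ⟨n, rfl⟩; exact alb n⟩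
  have hAle : ∀ n, A ≤ a n := fun n => ciInf_le habdd n
  have htend : Tendsto a atTop (nhds A) :=
    tendsto_atTop_ciInf (antitone_nat_of_succ_le amono) habdd
  have chain : ∀ n k, lam * D (seq (n+k)) (seq n) ≤ a n - a (n+k) := by
    intro n k
    induction k with
    | zero => simp [D_self]
    | succ k ih =>
      have h1 := adec (n+k)
      have h2 : D (seq (n+k+1)) (seq n) ≤ D (seq (n+k+1)) (seq (n+k)) + D (seq (n+k)) (seq n) :=
        D_tri _ _ _
      have h3 := mul_le_mul_of_nonneg_left h2 hlam.le
      rw [mul_add] at h3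
      show lam * D (seq (n+k+1)) (seq n) ≤ a n - a (n+k+1)
      linarith
  have chain2 : ∀ n N, n ≤ N → lam * D (seq N) (seq n) ≤ a n - A := by
    intro n N hnN
    obtain ⟨k, rfl⟩ := le_iff_exists_add.mp hnN
    exact (chain n k).trans (by linarith [hAle (n+k)])
  have cauchy : CauchySeq seq := by
    apply cauchySeq_of_le_tendsto_0 (fun N => 2 * (a N - A) / lam)
    · intro i j N hNi hNj
      have d1 : dist (seq i) (seq j) ≤ D (seq i) (seq N) + D (seq j) (seq N) := by
        calc dist (seq i) (seq j) ≤ dist (seq i) (seq N) + dist (seq N) (seq j) :=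
              dist_triangle _ _ _
          _ = ‖seq i - seq N‖ + ‖seq j - seq N‖ := by
              rw [dist_eq_norm, dist_eq_norm, norm_sub_rev (seq N)]
          _ ≤ D (seq i) (seq N) + D (seq j) (seq N) := add_le_add (D_norm _ _) (D_norm _ _)
      have e1 := chain2 N i hNi
      have e2 := chain2 N j hNj
      have hd : 2 * (a N - A) / lam = (a N - A)/lam + (a N - A)/lam := by ring
      have f1 : D (seq i) (seq N) ≤ (a N - A)/lam := by
        rw [le_div_iff₀ hlam]; linarith
      have f2 : D (seq j) (seq N) ≤ (a N - A)/lam := by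
        rw [le_div_iff₀ hlam]; linarith
      linarith
    · have : Tendsto (fun N => 2 * (a N - A) / lam) atTop (nhds (2 * (A - A) / lam)) :=
        ((htend.sub tendsto_const_nhds).const_mul 2).div_const lam
      simpa using this
  obtain ⟨xb, hxb⟩ := cauchySeq_tendsto_of_complete cauchy
  have Dlim : ∀ n, lam * D xb (seq n) ≤ a n - A := by
    intro n
    have hcont : Tendsto (fun N => lam * D (seq N) (seq n)) atTop (nhds (lam * D xb (seq n))) :=
      (((D_cont (seq n)).tendsto xb).comp hxb).const_mul lam
    apply le_of_tendsto hcont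
    filter_upwards [Filter.eventually_ge_atTop n] with N hN
    exact chain2 n N hN
  have hxbA : h xb ≤ (A : EReal) := by
    by_contra hcon
    have hlt : (A : EReal) < h xb := not_le.mp hcon
    obtain ⟨b, hAb, hb⟩ : ∃ b : ℝ, A < b ∧ (b : EReal) < h xb := by
      rcases eq_or_ne (h xb) ⊤ with ht | ht
      · exact ⟨A + 1, lt_add_one A, by rw [ht]; exact EReal.coe_lt_top _⟩
      · have hfx : h xb = ((h xb).toReal : EReal) := (EReal.coe_toReal ht (hnb xb)).symm
        have hAt : A < (h xb).toReal := by rw [hfx] at hlt; exact_mod_cast hlt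
        refine ⟨(A + (h xb).toReal)/2, by linarith, ?_⟩
        rw [hfx]; exact_mod_cast (by linarith : (A + (h xb).toReal)/2 < (h xb).toReal)
    have h1 : ∀ᶠ N in atTop, (b : EReal) < h (seq N) := hxb.eventually (hlsch xb b hb)
    have h2 : ∀ᶠ N in atTop, a N < b := htend.eventually_lt_const hAb
    obtain ⟨N, hN1, hN2⟩ := (h1.and h2).exists
    have h3 : (b : EReal) < ((a N : ℝ) : EReal) := by
      rwa [← EReal.coe_toReal (hprop N) (hnb _)] at hN1
    have : b < a N := by exact_mod_cast h3
    linarith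
  have hxbtop : h xb ≠ ⊤ := fun ht => by
    rw [ht] at hxbA; exact (EReal.coe_ne_top A) (top_le_iff.mp hxbA)
  have hxbR : (h xb).toReal ≤ A := by
    have := EReal.toReal_le_toReal hxbA (hnb xb) (EReal.coe_ne_top A)
    simpa using this
  refine ⟨xb, hxbtop, ?_, ?_⟩
  · have := Dlim 0
    have h0 : a 0 = (h x₀).toReal := rfl
    have hD0 : seq 0 = x₀ := rfl
    rw [hD0] at this
    linarith [hxbR]
  · intro y
    by_contra hcon
    have hlt : h y + ((lam * D y xb : ℝ) : EReal) < h xb := not_le.mp hcon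
    have hyt : h y ≠ ⊤ := by
      intro ht
      rw [ht, EReal.top_add_of_ne_bot (EReal.coe_ne_bot _)] at hlt
      exact not_top_lt hlt
    have hy' : h y = ((h y).toReal : EReal) := (EReal.coe_toReal hyt (hnb y)).symm
    have hxb' : h xb = ((h xb).toReal : EReal) := (EReal.coe_toReal hxbtop (hnb xb)).symm
    have hltR : (h y).toReal + lam * D y xb < (h xb).toReal := by
      rw [hy', hxb', ← EReal.coe_add] at hlt
      exact_mod_cast hlt
    have hStep : ∀ n, y ∈ S (seq n) := by
      intro n
      have hn' : h (seq n) = (a n : EReal) := (EReal.coe_toReal (hprop n) (hnb _)).symm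
      show h y + ((lam * D y (seq n) : ℝ) : EReal) ≤ h (seq n)
      rw [hy', hn', ← EReal.coe_add, EReal.coe_le_coe_iff]
      have t1 : D y (seq n) ≤ D y xb + D xb (seq n) := D_tri _ _ _
      have t2 := Dlim n
      have t3 := mul_le_mul_of_nonneg_left t1 hlam.le
      rw [mul_add] at t3
      linarith [hxbR, hltR]
    have hfinal : ∀ n : ℕ, A ≤ (h y).toReal + (1/2 : ℝ)^n := fun n =>
      le_trans (hAle (n+1)) ((hchoose n).2 y (hStep n))
    have hAty : A ≤ (h y).toReal := by
      have htt : Tendsto (fun n : ℕ => (h y).toReal + (1/2 : ℝ)^n) atTop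
          (nhds ((h y).toReal + 0)) :=
        tendsto_const_nhds.add (tendsto_pow_atTop_nhds_zero_of_lt_one (by norm_num) (by norm_num))
      rw [add_zero] at htt
      exact ge_of_tendsto htt (Filter.Eventually.of_forall hfinal)
    have hDpos : 0 ≤ lam * D y xb := mul_nonneg hlam.le (D_nonneg _ _)
    linarith


private lemma sandwich_aux {X : Type*} [NormedAddCommGroup X] [NormedSpace ℝ X]
    (r : X → EReal) (p₀ : X → ℝ)
    (hp_smul : ∀ (c : ℝ) (v : X), p₀ (c • v) = |c| * p₀ v)
    (hp_add : ∀ v w, p₀ (v + w) ≤ p₀ v + p₀ w)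
    (hr0 : r 0 = 0)
    (hlb : ∀ v, ((-(p₀ v) : ℝ) : EReal) ≤ r v)
    (hnb : ∀ v, r v ≠ ⊥)
    (hdom : ∀ (v w : X) (a b : ℝ), 0 < a → 0 < b → a + b = 1 → r v ≠ ⊤ → r w ≠ ⊤ →
      r (a • v + b • w) ≠ ⊤ ∧ (r (a • v + b • w)).toReal ≤ a * (r v).toReal + b * (r w).toReal) :
    ∃ ℓ : X →ₗ[ℝ] ℝ, (∀ v, |ℓ v| ≤ p₀ v) ∧ ∀ v, ((ℓ v : ℝ) : EReal) ≤ r v := by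
  classical
  have hp0 : p₀ 0 = 0 := by
    have := hp_smul 0 0
    simpa using this
  have hp_neg : ∀ v, p₀ (-v) = p₀ v := by
    intro v
    have := hp_smul (-1) v
    simpa using this
  have hp_nonneg : ∀ v, 0 ≤ p₀ v := by
    intro v
    have h1 := hp_add v (-v)
    rw [add_neg_cancel, hp0, hp_neg] at h1
    linarith
  have hp_sub : ∀ v w : X, p₀ w - p₀ v ≤ p₀ (v - w) := by
    intro v w
    have h1 := hp_add (w - v) v
    rw [sub_add_cancel] at h1
    have h2 : p₀ (w - v) = p₀ (v - w) := by rw [← neg_sub v w, hp_neg]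
    linarith
  haveI hne : Nonempty {w : X // r w ≠ ⊤} := ⟨⟨0, by rw [hr0]; exact EReal.zero_ne_top⟩⟩
  set rr : X → ℝ := fun w => (r w).toReal with hrrdef
  have hrr_lb : ∀ w : X, r w ≠ ⊤ → -(p₀ w) ≤ rr w := by
    intro w hw
    have := EReal.toReal_le_toReal (hlb w) (EReal.coe_ne_bot _) hw
    simpa using this
  set g : X → ℝ := fun v => ⨅ w : {w : X // r w ≠ ⊤}, (rr w.1 + p₀ (v - w.1)) with hgdef
  have gbdd : ∀ (v : X) (w : {w : X // r w ≠ ⊤}), -(p₀ v) ≤ rr w.1 + p₀ (v - w.1) := by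
    intro v w
    have h1 := hrr_lb w.1 w.2
    have h2 := hp_sub v w.1
    linarith
  have gbddB : ∀ v : X, BddBelow (Set.range fun w : {w : X // r w ≠ ⊤} => rr w.1 + p₀ (v - w.1)) :=
    fun v => ⟨-(p₀ v), by rintro _ ⟨w, rfl⟩; exact gbdd v w⟩
  have g_le : ∀ (w : X), r w ≠ ⊤ → ∀ v, g v ≤ rr w + p₀ (v - w) :=
    fun w hw v => ciInf_le (gbddB v) ⟨w, hw⟩
  have g_lb : ∀ v, -(p₀ v) ≤ g v := fun v => le_ciInf (gbdd v)
  have g_le_p : ∀ v, g v ≤ p₀ v := by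
    intro v
    have h1 := g_le 0 (by rw [hr0]; exact EReal.zero_ne_top) v
    have h2 : rr 0 = 0 := by rw [hrrdef]; simp [hr0]
    rw [h2, sub_zero, zero_add] at h1
    exact h1
  have g0 : g 0 = 0 := le_antisymm (by simpa [hp0] using g_le_p 0) (by simpa [hp0] using g_lb 0)
  have gconv : ∀ (v₁ v₂ : X) (t s : ℝ), 0 < t → 0 < s → t + s = 1 →
      g (t • v₁ + s • v₂) ≤ t * g v₁ + s * g v₂ := by
    intro v₁ v₂ t s ht hs hts
    apply le_of_forall_pos_le_add
    intro δ hδ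
    obtain ⟨w₁, hw₁⟩ := exists_lt_of_ciInf_lt (lt_add_of_pos_right (g v₁) hδ)
    obtain ⟨w₂, hw₂⟩ := exists_lt_of_ciInf_lt (lt_add_of_pos_right (g v₂) hδ)
    obtain ⟨hdt, hdr⟩ := hdom w₁.1 w₂.1 t s ht hs hts w₁.2 w₂.2
    have hG := g_le _ hdt (t • v₁ + s • v₂)
    have hrw : t • v₁ + s • v₂ - (t • w₁.1 + s • w₂.1) = t • (v₁ - w₁.1) + s • (v₂ - w₂.1) := by
      module
    have hp : p₀ (t • v₁ + s • v₂ - (t • w₁.1 + s • w₂.1)) ≤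
        t * p₀ (v₁ - w₁.1) + s * p₀ (v₂ - w₂.1) := by
      rw [hrw]
      refine (hp_add _ _).trans ?_
      rw [hp_smul, hp_smul, abs_of_pos ht, abs_of_pos hs]
    calc g (t • v₁ + s • v₂) ≤ rr (t • w₁.1 + s • w₂.1) + p₀ (t • v₁ + s • v₂ - (t • w₁.1 + s • w₂.1)) := hG
      _ ≤ (t * rr w₁.1 + s * rr w₂.1) + (t * p₀ (v₁ - w₁.1) + s * p₀ (v₂ - w₂.1)) :=
          add_le_add hdr hp
      _ = t * (rr w₁.1 + p₀ (v₁ - w₁.1)) + s * (rr w₂.1 + p₀ (v₂ - w₂.1)) := by ring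
      _ ≤ t * (g v₁ + δ) + s * (g v₂ + δ) :=
          add_le_add (mul_le_mul_of_nonneg_left hw₁.le ht.le)
            (mul_le_mul_of_nonneg_left hw₂.le hs.le)
      _ = t * g v₁ + s * g v₂ + (t + s) * δ := by ring
      _ = t * g v₁ + s * g v₂ + δ := by rw [hts, one_mul]
  have gmono : ∀ (v : X) (t s : ℝ), 0 < t → t ≤ s → g (t • v) / t ≤ g (s • v) / s := by
    intro v t s ht hts
    rcases eq_or_lt_of_le hts with rfl | hlt
    · exact le_refl _
    · have hs : 0 < s := ht.trans hlt
      have hts1 : t / s < 1 := (div_lt_one hs).mpr hlt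
      have hc := gconv (s • v) 0 (t/s) (1 - t/s) (by positivity) (by linarith) (by ring)
      rw [smul_zero, add_zero, smul_smul, div_mul_cancel₀ _ hs.ne', g0, mul_zero, add_zero] at hc
      have h2 := mul_le_mul_of_nonneg_right hc hs.le
      have h3 : t / s * g (s • v) * s = g (s • v) * t := by field_simp
      rw [h3] at h2
      rw [div_le_div_iff₀ ht hs]
      exact h2
  haveI : Nonempty {t : ℝ // 0 < t} := ⟨⟨1, one_pos⟩⟩
  set d : X → ℝ := fun v => ⨅ t : {t : ℝ // 0 < t}, g (t.1 • v) / t.1 with hddef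
  have dbdd : ∀ (v : X) (t : {t : ℝ // 0 < t}), -(p₀ v) ≤ g (t.1 • v) / t.1 := by
    intro v t
    rw [le_div_iff₀ t.2]
    have h1 := g_lb (t.1 • v)
    rw [hp_smul, abs_of_pos t.2] at h1
    linarith
  have dbddB : ∀ v : X, BddBelow (Set.range fun t : {t : ℝ // 0 < t} => g (t.1 • v) / t.1) :=
    fun v => ⟨-(p₀ v), by rintro _ ⟨t, rfl⟩; exact dbdd v t⟩
  have d_le : ∀ (v : X) (t : ℝ) (ht : 0 < t), d v ≤ g (t • v) / t :=
    fun v t ht => ciInf_le (dbddB v) ⟨t, ht⟩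
  have d_lb : ∀ v, -(p₀ v) ≤ d v := fun v => le_ciInf (dbdd v)
  have d_le_g : ∀ v, d v ≤ g v := by
    intro v
    have := d_le v 1 one_pos
    rwa [one_smul, div_one] at this
  have d_le_p : ∀ v, d v ≤ p₀ v := fun v => (d_le_g v).trans (g_le_p v)
  have d0 : d 0 = 0 := le_antisymm (by simpa [hp0] using d_le_p 0) (by simpa [hp0] using d_lb 0)
  have dsle : ∀ (c : ℝ), 0 < c → ∀ v, d (c • v) ≤ c * d v := by
    intro c hc v
    have h1 : ∀ s : ℝ, 0 < s → d (c • v) / c ≤ g (s • v) / s := by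
      intro s hs
      have h2 := d_le (c • v) (s/c) (by positivity)
      rw [smul_smul, div_mul_cancel₀ _ hc.ne', div_div_eq_mul_div] at h2
      rw [div_le_div_iff₀ hc hs]
      have h3 := mul_le_mul_of_nonneg_right h2 hs.le
      rwa [div_mul_cancel₀ _ hs.ne'] at h3
    have h2 : d (c • v) / c ≤ d v := le_ciInf (fun s => h1 s.1 s.2)
    rw [div_le_iff₀ hc] at h2
    linarith [h2, mul_comm (d v) c]
  have d_hom : ∀ (c : ℝ), 0 < c → ∀ v, d (c • v) = c * d v := by
    intro c hc v
    refine le_antisymm (dsle c hc v) ?_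
    have h1 := dsle c⁻¹ (inv_pos.mpr hc) (c • v)
    rw [smul_smul, inv_mul_cancel₀ hc.ne', one_smul] at h1
    have h3 := mul_le_mul_of_nonneg_left h1 hc.le
    rwa [← mul_assoc, mul_inv_cancel₀ hc.ne', one_mul] at h3
  have d_add : ∀ v w, d (v + w) ≤ d v + d w := by
    intro v w
    apply le_of_forall_pos_le_add
    intro δ hδ
    obtain ⟨t₁, ht₁⟩ := exists_lt_of_ciInf_lt (lt_add_of_pos_right (d v) (half_pos hδ))
    obtain ⟨t₂, ht₂⟩ := exists_lt_of_ciInf_lt (lt_add_of_pos_right (d w) (half_pos hδ))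
    set t := min t₁.1 t₂.1 / 2 with htdef
    have htmin : 0 < min t₁.1 t₂.1 := lt_min t₁.2 t₂.2
    have ht : 0 < t := by positivity
    have h2t1 : 2 * t ≤ t₁.1 := by
      have := min_le_left t₁.1 t₂.1
      rw [htdef]; linarith
    have h2t2 : 2 * t ≤ t₂.1 := by
      have := min_le_right t₁.1 t₂.1
      rw [htdef]; linarith
    have key := d_le (v + w) t ht
    have hsplit : g (t • (v + w)) ≤ (1/2) * g ((2*t) • v) + (1/2) * g ((2*t) • w) := by
      have hc := gconv ((2*t) • v) ((2*t) • w) (1/2) (1/2) one_half_pos one_half_pos (by norm_num)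
      rw [smul_smul, smul_smul, show (1/2 : ℝ) * (2*t) = t by ring, ← smul_add] at hc
      exact hc
    have hq : g (t • (v + w)) / t ≤ g ((2*t) • v) / (2*t) + g ((2*t) • w) / (2*t) := by
      rw [← add_div, div_le_div_iff₀ ht (by linarith : (0:ℝ) < 2*t)]
      nlinarith [mul_le_mul_of_nonneg_right hsplit (show (0:ℝ) ≤ 2*t by linarith)]
    have m1 : g ((2*t) • v) / (2*t) ≤ g (t₁.1 • v) / t₁.1 := gmono v (2*t) t₁.1 (by linarith) h2t1
    have m2 : g ((2*t) • w) / (2*t) ≤ g (t₂.1 • w) / t₂.1 := gmono w (2*t) t₂.1 (by linarith) h2t2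
    calc d (v + w) ≤ g (t • (v + w)) / t := key
      _ ≤ g ((2*t) • v) / (2*t) + g ((2*t) • w) / (2*t) := hq
      _ ≤ g (t₁.1 • v) / t₁.1 + g (t₂.1 • w) / t₂.1 := add_le_add m1 m2
      _ ≤ (d v + δ/2) + (d w + δ/2) := add_le_add ht₁.le ht₂.le
      _ = d v + d w + δ := by ring
  obtain ⟨ℓ, -, hℓ⟩ := exists_extension_of_le_sublinear ⟨⊥, 0⟩ d d_hom d_add (fun x => by
    have hx : (x : X) = 0 := x.2
    simp [hx, d0])
  refine ⟨ℓ, fun v => abs_le.mpr ⟨?_, (hℓ v).trans (d_le_p v)⟩, ?_⟩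
  · have h1 := (hℓ (-v)).trans (d_le_p (-v))
    rw [map_neg, hp_neg] at h1
    linarith
  · intro v
    rcases eq_or_ne (r v) ⊤ with ht | ht
    · rw [ht]; exact le_top
    · have h2 := g_le v ht v
      rw [sub_self, hp0, add_zero] at h2
      have h1 : ℓ v ≤ rr v := le_trans (hℓ v) (le_trans (d_le_g v) h2)
      calc ((ℓ v : ℝ) : EReal) ≤ (rr v : EReal) := by exact_mod_cast h1
        _ = r v := EReal.coe_toReal ht (hnb v)


set_option maxHeartbeats 1000000 in
/-- Borwein's variant of the Brøndsted–Rockafellar theorem: if `f : X → ]−∞,+∞]` is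
proper, lsc and convex, `ε > 0`, `β > 0`, `x₀ ∈ dom f` and `x*₀ ∈ ∂_ε f(x₀)`, then there
exist `x_ε` and `x*_ε ∈ ∂f(x_ε)` with `‖x_ε − x₀‖ + β|⟨x_ε − x₀, x*₀⟩| ≤ √ε`,
`‖x*_ε − x*₀‖ ≤ √ε (1 + β‖x*₀‖)` and `|⟨x_ε − x₀, x*_ε⟩| ≤ ε + √ε/β`. -/
theorem stmt_15 {X : Type*} [NormedAddCommGroup X] [NormedSpace ℝ X] [CompleteSpace X]
    (f : X → EReal)
    (hproper₁ : ∀ x, f x ≠ ⊥) (hproper₂ : ∃ x, f x ≠ ⊤)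
    (hlsc : LowerSemicontinuous f)
    (hconvex : ∀ x y : X, ∀ a b : ℝ, 0 ≤ a → 0 ≤ b → a + b = 1 →
      f (a • x + b • y) ≤ (a : EReal) * f x + (b : EReal) * f y)
    (ε β : ℝ) (hε : 0 < ε) (hβ : 0 < β)
    (x₀ : X) (hx₀ : f x₀ ≠ ⊤)
    (x'₀ : StrongDual ℝ X)
    (hsub : ∀ y : X, ((x'₀ (y - x₀) : ℝ) : EReal) + f x₀ ≤ f y + (ε : ℝ)) :
    ∃ (xe : X) (x'e : StrongDual ℝ X),
      (∀ y : X, ((x'e (y - xe) : ℝ) : EReal) + f xe ≤ f y) ∧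
      ‖xe - x₀‖ + β * |x'₀ (xe - x₀)| ≤ Real.sqrt ε ∧
      ‖x'e - x'₀‖ ≤ Real.sqrt ε * (1 + β * ‖x'₀‖) ∧
      |x'e (xe - x₀)| ≤ ε + Real.sqrt ε / β := by
  classical
  set lam := Real.sqrt ε with hlamdef
  have hlam : 0 < lam := Real.sqrt_pos.mpr hε
  set F₀ := (f x₀).toReal with hF₀def
  have hf₀ : f x₀ = (F₀ : EReal) := (EReal.coe_toReal hx₀ (hproper₁ x₀)).symm
  set c : X → ℝ := fun y => x'₀ (x₀ - y) with hcdef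
  have hcsub : ∀ y, c y = -(x'₀ (y - x₀)) := by
    intro y
    rw [hcdef]
    show x'₀ (x₀ - y) = -(x'₀ (y - x₀))
    rw [← map_neg, neg_sub]
  set h : X → EReal := fun y => f y + ((c y : ℝ) : EReal) with hhdef
  have hnb : ∀ y, h y ≠ ⊥ := by
    intro y
    show f y + ((c y : ℝ) : EReal) ≠ ⊥
    rw [Ne, EReal.add_eq_bot_iff]
    push_neg
    exact ⟨hproper₁ y, EReal.coe_ne_bot _⟩
  have hhtop : ∀ y, f y ≠ ⊤ → h y ≠ ⊤ := by
    intro y hy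
    have hfy : f y = ((f y).toReal : EReal) := (EReal.coe_toReal hy (hproper₁ y)).symm
    show f y + ((c y : ℝ) : EReal) ≠ ⊤
    rw [hfy, ← EReal.coe_add]
    exact EReal.coe_ne_top _
  have hftop : ∀ y, h y ≠ ⊤ → f y ≠ ⊤ := by
    intro y hy hf
    apply hy
    show f y + ((c y : ℝ) : EReal) = ⊤
    rw [hf]
    exact EReal.top_add_of_ne_bot (EReal.coe_ne_bot _)
  have hval : ∀ y, f y ≠ ⊤ → h y = (((f y).toReal + c y : ℝ) : EReal) := by
    intro y hy
    show f y + ((c y : ℝ) : EReal) = _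
    rw [EReal.coe_add, EReal.coe_toReal hy (hproper₁ y)]
  set D : X → X → ℝ := fun u v => ‖u - v‖ + β * |x'₀ (u - v)| with hDdef
  have D_nonneg : ∀ u v, 0 ≤ D u v := fun u v =>
    add_nonneg (norm_nonneg _) (mul_nonneg hβ.le (abs_nonneg _))
  have D_self : ∀ u, D u u = 0 := fun u => by simp [hDdef]
  have D_tri : ∀ u v w, D u w ≤ D u v + D v w := by
    intro u v w
    have h1 : u - w = (u - v) + (v - w) := by abel
    show ‖u - w‖ + β * |x'₀ (u - w)| ≤ _
    rw [h1, map_add]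
    have h2 : ‖(u - v) + (v - w)‖ ≤ ‖u - v‖ + ‖v - w‖ := norm_add_le _ _
    have h3 : |x'₀ (u - v) + x'₀ (v - w)| ≤ |x'₀ (u - v)| + |x'₀ (v - w)| := abs_add_le _ _
    have h4 := mul_le_mul_of_nonneg_left h3 hβ.le
    show _ ≤ (‖u - v‖ + β * |x'₀ (u - v)|) + (‖v - w‖ + β * |x'₀ (v - w)|)
    linarith
  have D_norm : ∀ u v, ‖u - v‖ ≤ D u v := fun u v =>
    le_add_of_nonneg_right (mul_nonneg hβ.le (abs_nonneg _))
  have D_cont : ∀ v, Continuous fun u => D u v := by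
    intro v
    exact ((continuous_id.sub continuous_const).norm).add
      (continuous_const.mul ((x'₀.continuous.comp (continuous_id.sub continuous_const)).abs))
  have hccont : Continuous c := x'₀.continuous.comp (continuous_const.sub continuous_id)
  have hlsch : ∀ (x : X) (b : ℝ), (b : EReal) < h x → ∀ᶠ y in nhds x, (b : EReal) < h y := by
    intro x b hb
    obtain ⟨s', hs'1, hs'2⟩ : ∃ s' : ℝ, (s' : EReal) < f x ∧ b < s' + c x := by
      rcases eq_or_ne (f x) ⊤ with ht | ht
      · exact ⟨b - c x + 1, by rw [ht]; exact EReal.coe_lt_top _, by linarith⟩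
      · have hfx : f x = ((f x).toReal : EReal) := (EReal.coe_toReal ht (hproper₁ x)).symm
        have hbs : b < (f x).toReal + c x := by
          rw [hval x ht] at hb
          exact_mod_cast hb
        refine ⟨(f x).toReal - ((f x).toReal + c x - b)/2, ?_, by linarith⟩
        rw [hfx]
        exact_mod_cast (by linarith : (f x).toReal - ((f x).toReal + c x - b)/2 < (f x).toReal)
    set δ := s' + c x - b with hδdef
    have hδ : 0 < δ := by linarith
    have h1 : ∀ᶠ y in nhds x, (s' : EReal) < f y := hlsc x _ hs'1
    have h2 : ∀ᶠ y in nhds x, c y ∈ Set.Ioo (c x - δ) (c x + δ) :=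
      hccont.continuousAt (Ioo_mem_nhds (by linarith) (by linarith))
    filter_upwards [h1, h2] with y hy1 hy2
    have h3 : (b : EReal) < ((s' + c y : ℝ) : EReal) := by
      exact_mod_cast (by rcases hy2 with ⟨hh, -⟩; rw[hδdef] at hh; linarith : b < s' + c y)
    refine h3.trans_le ?_
    show ((s' + c y : ℝ) : EReal) ≤ f y + ((c y : ℝ) : EReal)
    rw [EReal.coe_add]
    exact add_le_add_left hy1.le _
  have h_lb : ∀ y, ((F₀ - ε : ℝ) : EReal) ≤ h y := by
    intro y
    rcases eq_or_ne (f y) ⊤ with ht | ht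
    · show _ ≤ f y + ((c y : ℝ) : EReal)
      rw [ht, EReal.top_add_of_ne_bot (EReal.coe_ne_bot _)]
      exact le_top
    · have hy := hsub y
      rw [hf₀, ← EReal.coe_toReal ht (hproper₁ y), ← EReal.coe_add, ← EReal.coe_add] at hy
      have hyR : x'₀ (y - x₀) + F₀ ≤ (f y).toReal + ε := by exact_mod_cast hy
      rw [hval y ht]
      have := hcsub y
      exact_mod_cast (by linarith : F₀ - ε ≤ (f y).toReal + c y)
  have hcx₀ : c x₀ = 0 := by rw [hcdef]; simp
  have hhx₀ : h x₀ = (F₀ : EReal) := by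
    show f x₀ + ((c x₀ : ℝ) : EReal) = _
    rw [hcx₀, hf₀]
    norm_num
  have hhx₀top : h x₀ ≠ ⊤ := by rw [hhx₀]; exact EReal.coe_ne_top _
  obtain ⟨xe, hxetop, hxec, hxekey⟩ := ekeland_aux h hnb D D_nonneg D_self D_tri D_norm D_cont
    hlsch (F₀ - ε) h_lb lam hlam x₀ hhx₀top
  have hfe_top : f xe ≠ ⊤ := hftop xe hxetop
  set F := (f xe).toReal with hFdef
  have hfe : f xe = (F : EReal) := (EReal.coe_toReal hfe_top (hproper₁ xe)).symm
  have hhxe : (h xe).toReal = F + c xe := by rw [hval xe hfe_top, EReal.toReal_coe]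
  -- bound 2
  have hD2 : D xe x₀ ≤ lam := by
    have h1 : F₀ - ε ≤ (h xe).toReal := by
      have := EReal.toReal_le_toReal (h_lb xe) (EReal.coe_ne_bot _) hxetop
      rwa [EReal.toReal_coe] at this
    have h2 : (h x₀).toReal = F₀ := by rw [hhx₀]; simp
    rw [h2] at hxec
    have h3 : lam * D xe x₀ ≤ ε := by linarith
    have h4 : D xe x₀ ≤ ε / lam := (le_div_iff₀' hlam).mpr h3
    rwa [hlamdef, Real.div_sqrt] at h4
  have bound2 : ‖xe - x₀‖ + β * |x'₀ (xe - x₀)| ≤ Real.sqrt ε := hD2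
  -- set up sandwich
  set p₀ : X → ℝ := fun v => lam * (‖v‖ + β * |x'₀ v|) with hp₀def
  have hp_smul : ∀ (t : ℝ) (v : X), p₀ (t • v) = |t| * p₀ v := by
    intro t v
    show lam * (‖t • v‖ + β * |x'₀ (t • v)|) = _
    rw [norm_smul, map_smul]
    show lam * (‖t‖ * ‖v‖ + β * |t * x'₀ v|) = |t| * (lam * (‖v‖ + β * |x'₀ v|))
    rw [abs_mul, Real.norm_eq_abs]
    ring
  have hp_add : ∀ v w, p₀ (v + w) ≤ p₀ v + p₀ w := by
    intro v w
    show lam * (‖v + w‖ + β * |x'₀ (v + w)|) ≤ _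
    rw [map_add]
    have h2 := norm_add_le v w
    have h3 := abs_add_le (x'₀ v) (x'₀ w)
    have h4 := mul_le_mul_of_nonneg_left h3 hβ.le
    show _ ≤ lam * (‖v‖ + β * |x'₀ v|) + lam * (‖w‖ + β * |x'₀ w|)
    nlinarith [hlam.le]
  set r : X → EReal := fun v => f (xe + v) + ((-F - x'₀ v : ℝ) : EReal) with hrdef
  have hrnb : ∀ v, r v ≠ ⊥ := by
    intro v
    show f (xe + v) + _ ≠ ⊥
    rw [Ne, EReal.add_eq_bot_iff]
    push_neg
    exact ⟨hproper₁ _, EReal.coe_ne_bot _⟩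
  have hr0 : r 0 = 0 := by
    show f (xe + 0) + ((-F - x'₀ 0 : ℝ) : EReal) = 0
    rw [add_zero, map_zero, hfe]
    norm_cast
    ring
  have hrval : ∀ v, f (xe + v) ≠ ⊤ → r v = (((f (xe + v)).toReal - F - x'₀ v : ℝ) : EReal) := by
    intro v hv
    show f (xe + v) + _ = _
    rw [show ((f (xe + v)).toReal - F - x'₀ v : ℝ) = (f (xe + v)).toReal + (-F - x'₀ v) by ring,
      EReal.coe_add, EReal.coe_toReal hv (hproper₁ _)]
  have hrtop : ∀ v, f (xe + v) ≠ ⊤ → r v ≠ ⊤ := by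
    intro v hv
    rw [hrval v hv]
    exact EReal.coe_ne_top _
  have hrtop' : ∀ v, r v ≠ ⊤ → f (xe + v) ≠ ⊤ := by
    intro v hv hf
    apply hv
    show f (xe + v) + _ = ⊤
    rw [hf]
    exact EReal.top_add_of_ne_bot (EReal.coe_ne_bot _)
  have hlb : ∀ v, ((-(p₀ v) : ℝ) : EReal) ≤ r v := by
    intro v
    rcases eq_or_ne (f (xe + v)) ⊤ with ht | ht
    · have : r v = ⊤ := by
        show f (xe + v) + _ = ⊤
        rw [ht]; exact EReal.top_add_of_ne_bot (EReal.coe_ne_bot _)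
      rw [this]; exact le_top
    · have hk := hxekey (xe + v)
      have hDv : D (xe + v) xe = ‖v‖ + β * |x'₀ v| := by
        show ‖xe + v - xe‖ + β * |x'₀ (xe + v - xe)| = _
        rw [add_sub_cancel_left]
      rw [hval (xe + v) ht, hval xe hfe_top, hDv, ← EReal.coe_add] at hk
      have hkR : F + c xe ≤ ((f (xe + v)).toReal + c (xe + v)) + lam * (‖v‖ + β * |x'₀ v|) := by
        exact_mod_cast hk
      have hc2 : c (xe + v) = c xe - x'₀ v := by
        rw [hcdef]
        show x'₀ (x₀ - (xe + v)) = x'₀ (x₀ - xe) - x'₀ v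
        rw [← map_sub]
        congr 1
        abel
      rw [hrval v ht]
      rw [hc2] at hkR
      have hgoal : -(p₀ v) ≤ (f (xe + v)).toReal - F - x'₀ v := by
        have hp : p₀ v = lam * (‖v‖ + β * |x'₀ v|) := rfl
        rw [hp]; linarith
      exact_mod_cast hgoal
  have hdom : ∀ (v w : X) (a b : ℝ), 0 < a → 0 < b → a + b = 1 → r v ≠ ⊤ → r w ≠ ⊤ →
      r (a • v + b • w) ≠ ⊤ ∧ (r (a • v + b • w)).toReal ≤ a * (r v).toReal + b * (r w).toReal := by
    intro v w a b ha hb hab hv hw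
    have hfv := hrtop' v hv
    have hfw := hrtop' w hw
    have hpt : xe + (a • v + b • w) = a • (xe + v) + b • (xe + w) := by
      have h1 : a • (xe + v) + b • (xe + w) = (a + b) • xe + (a • v + b • w) := by
        rw [smul_add, smul_add, add_smul]; abel
      rw [h1, hab, one_smul]
    have hcv := hconvex (xe + v) (xe + w) a b ha.le hb.le hab
    rw [← hpt, ← EReal.coe_toReal hfv (hproper₁ _), ← EReal.coe_toReal hfw (hproper₁ _),
      ← EReal.coe_mul, ← EReal.coe_mul, ← EReal.coe_add] at hcv
    have hftop2 : f (xe + (a • v + b • w)) ≠ ⊤ :=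
      fun hc => (EReal.coe_ne_top _) (top_le_iff.mp (hc ▸ hcv))
    have hfR : (f (xe + (a • v + b • w))).toReal ≤
        a * (f (xe + v)).toReal + b * (f (xe + w)).toReal := by
      have := EReal.toReal_le_toReal hcv (hproper₁ _) (EReal.coe_ne_top _)
      rwa [EReal.toReal_coe] at this
    refine ⟨hrtop _ hftop2, ?_⟩
    rw [hrval _ hftop2, hrval v hfv, hrval w hfw]
    rw [EReal.toReal_coe, EReal.toReal_coe, EReal.toReal_coe]
    have hlin : x'₀ (a • v + b • w) = a * x'₀ v + b * x'₀ w := by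
      rw [map_add, map_smul, map_smul]; rfl
    rw [hlin]
    have hF : a * F + b * F = F := by rw [← add_mul, hab, one_mul]
    linarith [hfR, hF]
  obtain ⟨ℓ, habs, hler⟩ := sandwich_aux r p₀ hp_smul hp_add hr0 hlb hrnb hdom
  set K := lam * (1 + β * ‖x'₀‖) with hKdef
  have hK0 : 0 ≤ K := by positivity
  have hpK : ∀ v, p₀ v ≤ K * ‖v‖ := by
    intro v
    have h1 : |x'₀ v| ≤ ‖x'₀‖ * ‖v‖ := by
      have := x'₀.le_opNorm v
      rwa [Real.norm_eq_abs] at this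
    show lam * (‖v‖ + β * |x'₀ v|) ≤ lam * (1 + β * ‖x'₀‖) * ‖v‖
    nlinarith [mul_le_mul_of_nonneg_left h1 (mul_nonneg hlam.le hβ.le)]
  set x'ℓ : StrongDual ℝ X := ℓ.mkContinuous K (fun v => by
    rw [Real.norm_eq_abs]
    exact (habs v).trans (hpK v)) with hx'ℓdef
  have hx'ℓ_apply : ∀ v, x'ℓ v = ℓ v := fun v => rfl
  refine ⟨xe, x'₀ + x'ℓ, ?_, bound2, ?_, ?_⟩
  · intro y
    rcases eq_or_ne (f y) ⊤ with ht | ht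
    · rw [ht]; exact le_top
    · have hv : xe + (y - xe) = y := by abel
      have h1 := hler (y - xe)
      have hfv : f (xe + (y - xe)) ≠ ⊤ := by rw [hv]; exact ht
      rw [hrval _ hfv, hv] at h1
      have h1R : ℓ (y - xe) ≤ (f y).toReal - F - x'₀ (y - xe) := by exact_mod_cast h1
      have happ : (x'₀ + x'ℓ) (y - xe) = x'₀ (y - xe) + ℓ (y - xe) := rfl
      rw [happ, hfe, ← EReal.coe_toReal ht (hproper₁ y), ← EReal.coe_add]
      exact_mod_cast (by linarith : x'₀ (y - xe) + ℓ (y - xe) + F ≤ (f y).toReal)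
  · have he : x'₀ + x'ℓ - x'₀ = x'ℓ := by abel
    rw [he]
    exact (ℓ.mkContinuous_norm_le hK0 _)
  · have happ : (x'₀ + x'ℓ) (xe - x₀) = x'₀ (xe - x₀) + ℓ (xe - x₀) := rfl
    rw [happ]
    have h1 : |x'₀ (xe - x₀) + ℓ (xe - x₀)| ≤ |x'₀ (xe - x₀)| + |ℓ (xe - x₀)| := abs_add_le _ _
    have h2 : |ℓ (xe - x₀)| ≤ p₀ (xe - x₀) := habs _
    have h3 : p₀ (xe - x₀) ≤ lam * lam := by
      show lam * (‖xe - x₀‖ + β * |x'₀ (xe - x₀)|) ≤ lam * lam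
      exact mul_le_mul_of_nonneg_left hD2 hlam.le
    have h4 : lam * lam = ε := Real.mul_self_sqrt hε.le
    have h5 : |x'₀ (xe - x₀)| ≤ lam / β := by
      rw [le_div_iff₀ hβ]
      have h6 : ‖xe - x₀‖ ≥ 0 := norm_nonneg _
      have := hD2
      show |x'₀ (xe - x₀)| * β ≤ lam
      rw [hDdef] at this
      nlinarith
    have : Real.sqrt ε / β = lam / β := by rw [hlamdef]
    linarith
end

section
/- Let A : X ⇉ X* be a maximally monotone linear relation. If A* is monotone, then for every (v₀, v*₀) ∈ X × X*, inf_{(x,x*) ∈ X × X*} [ι_{gra A}(v₀ + x, v*₀ + x*) + ⟨x, x*⟩ + (1/2)‖x‖² + (1/2)‖x*‖²] = 0. -/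
open NormedSpace
open scoped Classical

open Filter Topology

section Auxiliary

/-- Ekeland-type variational principle. -/
lemma my_ekeland {α : Type*} [MetricSpace α] [CompleteSpace α]
    (f : α → ℝ) (hf : Continuous f) (c : ℝ) (hbd : ∀ x, c ≤ f x)
    (σ : ℝ) (hσ : 0 < σ) (x₀ : α) :
    ∃ x, (f x + σ * dist x x₀ ≤ f x₀) ∧ ∀ y, f x ≤ f y + σ * dist y x := by
  set P : α → α → Prop := fun x y => f x + σ * dist x y ≤ f y with hP
  have Prefl : ∀ x, P x x := fun x => by simp [hP]
  have Ptrans : ∀ {x y z}, P x y → P y z → P x z := by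
    intro x y z h1 h2
    have htri := dist_triangle x y z
    have : σ * dist x z ≤ σ * dist x y + σ * dist y z := by
      rw [← mul_add]; exact mul_le_mul_of_nonneg_left htri hσ.le
    simp only [hP] at h1 h2 ⊢
    linarith
  set m : α → ℝ := fun z => sInf (f '' {y | P y z}) with hm
  have hmne : ∀ z, (f '' {y | P y z}).Nonempty := fun z => ⟨f z, z, Prefl z, rfl⟩
  have hmbdd : ∀ z, BddBelow (f '' {y | P y z}) := by
    intro z; exact ⟨c, by rintro r ⟨y, _, rfl⟩; exact hbd y⟩
  have hmle : ∀ z y, P y z → m z ≤ f y := fun z y hy => csInf_le (hmbdd z) ⟨y, hy, rfl⟩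
  have hstep : ∀ p : α × ℕ, ∃ w, P w p.1 ∧ f w < m p.1 + (1/2)^p.2 := by
    intro p
    obtain ⟨r, ⟨w, hw, rfl⟩, hr⟩ := Real.lt_sInf_add_pos (hmne p.1)
      (show (0:ℝ) < (1/2)^p.2 by positivity)
    exact ⟨w, hw, hr⟩
  choose F hF1 hF2 using hstep
  set a : ℕ → α := fun n => Nat.rec x₀ (fun n x => F (x, n)) n with ha
  have ha0 : a 0 = x₀ := rfl
  have ha1 : ∀ n, P (a (n+1)) (a n) := fun n => hF1 (a n, n)
  have key2 : ∀ n y, P y (a (n+1)) → σ * dist y (a (n+1)) ≤ (1/2)^n := by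
    intro n y hy
    have h1 : m (a n) ≤ f y := hmle _ _ (Ptrans hy (ha1 n))
    have h2 : f (a (n+1)) < m (a n) + (1/2)^n := hF2 (a n, n)
    have h3 : f y + σ * dist y (a (n+1)) ≤ f (a (n+1)) := hy
    linarith
  have chain : ∀ n k, P (a (n+k)) (a n) := by
    intro n k
    induction k with
    | zero => exact Prefl _
    | succ k ih => exact Ptrans (show P (a (n+k+1)) (a (n+k)) from ha1 _) ih
  have hcauchy : CauchySeq a := by
    rw [Metric.cauchySeq_iff']
    intro ε hε
    obtain ⟨j, hj⟩ := exists_pow_lt_of_lt_one (mul_pos hσ hε) (show (1:ℝ)/2 < 1 by norm_num)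
    refine ⟨j+1, fun n hn => ?_⟩
    have hk : n = (j+1) + (n - (j+1)) := by omega
    have h1 : σ * dist (a n) (a (j+1)) ≤ (1/2)^j := by
      rw [hk]; exact key2 j _ (chain (j+1) (n - (j+1)))
    have : σ * dist (a n) (a (j+1)) < σ * ε := lt_of_le_of_lt h1 hj
    exact lt_of_mul_lt_mul_left this hσ.le
  obtain ⟨x, hx⟩ := cauchySeq_tendsto_of_complete hcauchy
  have hxan : ∀ n, P x (a n) := by
    intro n
    have hcont : Tendsto (fun y => f y + σ * dist y (a n)) (nhds x)
        (nhds (f x + σ * dist x (a n))) :=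
      (hf.tendsto x).add ((tendsto_const_nhds.mul
        ((continuous_id.dist continuous_const).tendsto x)))
    have hcomp : Tendsto (fun k => f (a k) + σ * dist (a k) (a n)) atTop
        (nhds (f x + σ * dist x (a n))) := hcont.comp hx
    refine le_of_tendsto hcomp ?_
    filter_upwards [eventually_ge_atTop n] with k hk
    have : k = n + (k - n) := by omega
    rw [this]; exact chain n (k - n)
  refine ⟨x, by simpa [ha0] using hxan 0, fun y => ?_⟩
  by_cases hy : P y x
  · have hyx : y = x := by
      have hd : ∀ n, dist y x ≤ (1/2)^n / σ + dist (a (n+1)) x := by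
        intro n
        have h1 : σ * dist y (a (n+1)) ≤ (1/2)^n := key2 n y (Ptrans hy (hxan (n+1)))
        have h2 : dist y (a (n+1)) ≤ (1/2)^n / σ := by
          rw [le_div_iff₀ hσ]; linarith [h1]
        calc dist y x ≤ dist y (a (n+1)) + dist (a (n+1)) x := dist_triangle _ _ _
          _ ≤ (1/2)^n / σ + dist (a (n+1)) x := by linarith
      have hlim : Tendsto (fun n => (1/2:ℝ)^n / σ + dist (a (n+1)) x) atTop (nhds 0) := by
        have l1 : Tendsto (fun n => (1/2:ℝ)^n / σ) atTop (nhds 0) := by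
          simpa using (tendsto_pow_atTop_nhds_zero_of_lt_one
            (by norm_num : (0:ℝ) ≤ 1/2) (by norm_num : (1:ℝ)/2 < 1)).div_const σ
        have l2 : Tendsto (fun n => dist (a (n+1)) x) atTop (nhds 0) := by
          have := (tendsto_iff_dist_tendsto_zero.mp hx).comp (tendsto_add_atTop_nat 1)
          simpa [Function.comp_def] using this
        simpa using l1.add l2
      have : dist y x ≤ 0 := ge_of_tendsto hlim (Eventually.of_forall hd)
      exact dist_le_zero.mp this
    subst hyx; simp
  · have : f x < f y + σ * dist y x := by
      simp only [hP] at hy; linarith [not_le.mp hy]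
    exact this.le

/-- Approximate conjugate of half-norm-squared. -/
lemma my_norming {Y : Type*} [NormedAddCommGroup Y] [NormedSpace ℝ Y]
    (g : Y →L[ℝ] ℝ) {η : ℝ} (hη : 0 < η) :
    ∃ y : Y, ‖y‖^2/2 - g y ≤ -‖g‖^2/2 + η := by
  rcases eq_or_lt_of_le (norm_nonneg g) with h0 | h0
  · exact ⟨0, by simp [← h0]; positivity⟩
  · set η' := min (η / ‖g‖) (‖g‖/2) with hη'
    have hη'pos : 0 < η' := lt_min (div_pos hη h0) (by linarith)
    have hlt : ‖g‖ - η' < ‖g‖ := by linarith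
    obtain ⟨x, hx1, hx2⟩ := g.exists_lt_apply_of_lt_opNorm hlt
    have hgx : ‖g‖ - η' < |g x| := by rwa [Real.norm_eq_abs] at hx2
    set y₀ := if 0 ≤ g x then x else -x with hy₀
    have hy₀n : ‖y₀‖ < 1 := by rw [hy₀]; split <;> simpa
    have hy₀g : ‖g‖ - η' < g y₀ := by
      rw [hy₀]; rcases abs_cases (g x) with ⟨he, _⟩ | ⟨he, hneg⟩
      · rw [if_pos (by linarith [abs_nonneg (g x)] : 0 ≤ g x)]; linarith [he ▸ hgx]
      · rw [if_neg (by linarith : ¬ 0 ≤ g x)]; rw [map_neg]; linarith [he ▸ hgx]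
    refine ⟨‖g‖ • y₀, ?_⟩
    have h1 : ‖‖g‖ • y₀‖^2/2 ≤ ‖g‖^2/2 := by
      rw [norm_smul, Real.norm_eq_abs, abs_of_nonneg h0.le]
      have : ‖g‖ * ‖y₀‖ ≤ ‖g‖ * 1 := by
        exact mul_le_mul_of_nonneg_left hy₀n.le h0.le
      nlinarith [norm_nonneg y₀, mul_nonneg h0.le (norm_nonneg y₀)]
    have h2 : ‖g‖^2 - η ≤ g (‖g‖ • y₀) := by
      rw [map_smul, smul_eq_mul]
      have : ‖g‖ * (‖g‖ - η') ≤ ‖g‖ * g y₀ := mul_le_mul_of_nonneg_left hy₀g.le h0.le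
      have hη'le : η' * ‖g‖ ≤ η := by
        have : η' ≤ η / ‖g‖ := min_le_left _ _
        calc η' * ‖g‖ ≤ (η / ‖g‖) * ‖g‖ := by nlinarith
          _ = η := by field_simp
      nlinarith
    linarith

set_option maxHeartbeats 2000000 in
lemma my_core {X : Type*} [NormedAddCommGroup X] [NormedSpace ℝ X] [CompleteSpace X]
    (S : Submodule ℝ (X × StrongDual ℝ X))
    (hadj : ∀ (z2 : StrongDual ℝ (StrongDual ℝ X)) (z1 : StrongDual ℝ X),
      (∀ w ∈ S, z1 w.1 = z2 w.2) → 0 ≤ z2 z1)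
    (xs : StrongDual ℝ X) (xss : StrongDual ℝ (StrongDual ℝ X)) (Gval : ℝ)
    (hG : ∀ w ∈ S, xs w.1 + xss w.2 - w.2 w.1 ≤ Gval) :
    xss xs ≤ Gval := by
  classical
  have hcontQ : Continuous (fun w : (X × StrongDual ℝ X) => w.2 w.1) :=
    isBoundedBilinearMap_apply.continuous.comp continuous_swap
  have hcontL : Continuous (fun w : (X × StrongDual ℝ X) => xs w.1 + xss w.2 - w.2 w.1) :=
    ((xs.continuous.comp continuous_fst).add (xss.continuous.comp continuous_snd)).sub hcontQ
  set T : @Submodule ℝ (X × StrongDual ℝ X) _ SeminormedAddCommGroup.toAddCommGroup.toAddCommMonoid NormedSpace.toModule := S.topologicalClosure with hTdef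
  have hST : (S : Set (X × StrongDual ℝ X)) ⊆ (T : Set (X × StrongDual ℝ X)) := S.le_topologicalClosure
  have hGT : ∀ w ∈ T, xs w.1 + xss w.2 - w.2 w.1 ≤ Gval := by
    intro w hw
    have hsub : (S : Set (X × StrongDual ℝ X)) ⊆ {w : (X × StrongDual ℝ X) | xs w.1 + xss w.2 - w.2 w.1 ≤ Gval} := fun u hu => hG u hu
    have hcl : IsClosed {w : (X × StrongDual ℝ X) | xs w.1 + xss w.2 - w.2 w.1 ≤ Gval} :=
      isClosed_le hcontL continuous_const
    have := closure_minimal hsub hcl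
    have hwcl : w ∈ closure (S : Set (X × StrongDual ℝ X)) := by
      rwa [← Submodule.topologicalClosure_coe]
    exact this hwcl
  have hTclosed : IsClosed (T : Set (X × StrongDual ℝ X)) := S.isClosed_topologicalClosure
  haveI : CompleteSpace ↥T := hTclosed.completeSpace_coe
  set f : ↥T → ℝ := fun w => (w:(X × StrongDual ℝ X)).2 (w:(X × StrongDual ℝ X)).1 - (xs (w:(X × StrongDual ℝ X)).1 + xss (w:(X × StrongDual ℝ X)).2) with hfdef
  have hfcont : Continuous f := by
    apply Continuous.sub
    · exact hcontQ.comp continuous_subtype_val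
    · exact ((xs.continuous.comp continuous_fst).add
        (xss.continuous.comp continuous_snd)).comp continuous_subtype_val
  have hfbd : ∀ w, -Gval ≤ f w := by
    intro w
    have := hGT (w:(X × StrongDual ℝ X)) w.2
    simp only [hfdef]
    linarith
  -- reduce to δ-approximate statement
  suffices hδ : ∀ δ : ℝ, 0 < δ → δ ≤ 1 → xss xs ≤ Gval + δ * (5 + ‖xs‖ + ‖xss‖) by
    by_contra hcon
    push_neg at hcon
    set K := 5 + ‖xs‖ + ‖xss‖ with hK
    have hKpos : 0 < K := by positivity
    set δ := min 1 ((xss xs - Gval) / (2 * K)) with hδdef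
    have hδpos : 0 < δ := lt_min one_pos (div_pos (by linarith) (by positivity))
    have h1 := hδ δ hδpos (min_le_left _ _)
    have h2 : δ ≤ (xss xs - Gval) / (2 * K) := min_le_right _ _
    have h3 : δ * K ≤ ((xss xs - Gval) / (2 * K)) * K :=
      mul_le_mul_of_nonneg_right h2 hKpos.le
    have h4 : ((xss xs - Gval) / (2 * K)) * K = (xss xs - Gval) / 2 := by
      field_simp
    rw [h4] at h3
    clear_value δ K
    linarith
  intro δ hδpos hδ1
  -- near minimizer
  have hrange_ne : (Set.range f).Nonempty := ⟨f 0, 0, rfl⟩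
  have hrange_bdd : BddBelow (Set.range f) := ⟨-Gval, by rintro r ⟨w, rfl⟩; exact hfbd w⟩
  obtain ⟨r, ⟨x₀, rfl⟩, hx₀⟩ := Real.lt_sInf_add_pos hrange_ne
    (show (0:ℝ) < δ^2 by positivity)
  set N := ‖(x₀:(X × StrongDual ℝ X))‖ with hN
  have hNnn : (0:ℝ) ≤ N := norm_nonneg _
  set σ := δ / (1 + N) with hσdef
  have hσpos : 0 < σ := by positivity
  have hσN : σ * (1 + N) = δ := by rw [hσdef]; field_simp
  have hσδ : σ ≤ δ := by
    rw [hσdef, div_le_iff₀ (by positivity)]; nlinarith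
  obtain ⟨w, hwA, hwB⟩ := my_ekeland f hfcont (-Gval) hfbd σ hσpos x₀
  have hfwlow : sInf (Set.range f) ≤ f w := csInf_le hrange_bdd ⟨w, rfl⟩
  have hdwx : σ * dist w x₀ ≤ δ^2 := by
    have := hwA
    linarith
  have hdist2 : dist w x₀ ≤ δ * (1 + N) := by
    have heq : σ * (δ * (1+N)) = δ^2 := by rw [hσdef]; field_simp
    nlinarith [dist_nonneg (x := w) (y := x₀)]
  have hnormw : ‖(w:(X × StrongDual ℝ X))‖ ≤ N + δ * (1 + N) := by
    have h1 : dist (w:(X × StrongDual ℝ X)) (x₀:(X × StrongDual ℝ X)) = dist w x₀ := (Subtype.dist_eq w x₀).symm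
    have h2 : ‖(w:(X × StrongDual ℝ X))‖ - ‖(x₀:(X × StrongDual ℝ X))‖ ≤ ‖(w:(X × StrongDual ℝ X)) - (x₀:(X × StrongDual ℝ X))‖ :=
      norm_sub_norm_le _ _
    rw [← dist_eq_norm, h1] at h2
    have : N = ‖(x₀:(X × StrongDual ℝ X))‖ := hN
    linarith
  set b := (w:(X × StrongDual ℝ X)).1 with hb
  set bs := (w:(X × StrongDual ℝ X)).2 with hbs
  -- the defect functional
  set Mfull : (X × StrongDual ℝ X) →L[ℝ] ℝ :=
    (ContinuousLinearMap.comp bs (ContinuousLinearMap.fst ℝ X (StrongDual ℝ X)) +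
      (inclusionInDoubleDual ℝ X b).comp (ContinuousLinearMap.snd ℝ X (StrongDual ℝ X))) -
    (ContinuousLinearMap.comp xs (ContinuousLinearMap.fst ℝ X (StrongDual ℝ X)) +
      ContinuousLinearMap.comp xss (ContinuousLinearMap.snd ℝ X (StrongDual ℝ X))) with hMdef
  have hMapp : ∀ u : (X × StrongDual ℝ X), Mfull u = bs u.1 + u.2 b - (xs u.1 + xss u.2) := by
    intro u
    rfl
  -- slope estimate
  have hkey : ∀ u : (X × StrongDual ℝ X), u ∈ T → ∀ t : ℝ,
      0 ≤ t * Mfull u + t^2 * (u.2 u.1) + σ * (|t| * ‖u‖) := by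
    intro u hu t
    set u' : ↥T := ⟨u, hu⟩ with hu'
    have hB := hwB (w + t • u')
    have hdist : dist (w + t • u') w = |t| * ‖u‖ := by
      rw [Subtype.dist_eq, dist_eq_norm]
      push_cast
      rw [show ((w:(X × StrongDual ℝ X)) + t • u - (w:(X × StrongDual ℝ X))) = t • u by abel, norm_smul, Real.norm_eq_abs]
    have hfy : f (w + t • u') = f w + (t * Mfull u + t^2 * (u.2 u.1)) := by
      simp only [hfdef, Submodule.coe_add, SetLike.val_smul]
      have h1 : ((w:(X × StrongDual ℝ X)) + t • u).1 = b + t • u.1 := rfl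
      have h2 : ((w:(X × StrongDual ℝ X)) + t • u).2 = bs + t • u.2 := rfl
      rw [h1, h2, hMapp]
      simp only [ContinuousLinearMap.add_apply, ContinuousLinearMap.smul_apply, map_add,
        map_smul, smul_eq_mul]
      ring
    rw [hfy, hdist] at hB
    linarith
  have hslope : ∀ u : (X × StrongDual ℝ X), u ∈ T → |Mfull u| ≤ σ * ‖u‖ := by
    intro u hu
    refine le_of_forall_pos_le_add fun η hη => ?_
    set s := η / (|u.2 u.1| + 1) with hs
    have hspos : 0 < s := by positivity
    have hsq : s * |u.2 u.1| ≤ η := by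
      rw [hs, div_mul_eq_mul_div, div_le_iff₀ (by positivity)]
      nlinarith [abs_nonneg (u.2 u.1)]
    have h2 : s^2 * (u.2 u.1) ≤ s * η := by
      have h3 : s * (u.2 u.1) ≤ s * |u.2 u.1| := mul_le_mul_of_nonneg_left (le_abs_self _) hspos.le
      nlinarith
    rw [abs_le]
    constructor
    · have hk := hkey u hu s
      rw [abs_of_pos hspos] at hk
      have h4 : s * (-(σ * ‖u‖ + η)) ≤ s * Mfull u := by nlinarith
      have h5 := le_of_mul_le_mul_left h4 hspos
      linarith
    · have hk := hkey u hu (-s)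
      rw [abs_neg, abs_of_pos hspos] at hk
      have h4 : s * Mfull u ≤ s * (σ * ‖u‖ + η) := by nlinarith
      exact le_of_mul_le_mul_left h4 hspos
  -- restriction to T and Hahn-Banach extension
  set M : ↥T →L[ℝ] ℝ := Mfull.comp T.subtypeL with hMrdef
  have hMnorm : ‖M‖ ≤ σ := by
    refine ContinuousLinearMap.opNorm_le_bound M hσpos.le fun u => ?_
    have := hslope (u:(X × StrongDual ℝ X)) u.2
    simpa [hMrdef, Real.norm_eq_abs] using this
  obtain ⟨h, hhext, hhnorm⟩ := exists_extension_norm_eq (T : Submodule ℝ (X × StrongDual ℝ X)) M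
  have hhnormle : ‖h‖ ≤ σ := hhnorm ▸ hMnorm
  set h1 : StrongDual ℝ X := h.comp (ContinuousLinearMap.inl ℝ X (StrongDual ℝ X)) with hh1
  set h2 : StrongDual ℝ (StrongDual ℝ X) := h.comp (ContinuousLinearMap.inr ℝ X (StrongDual ℝ X)) with hh2
  have happ : ∀ u : (X × StrongDual ℝ X), h u = h1 u.1 + h2 u.2 := by
    intro u
    have hu : u = (u.1, (0 : StrongDual ℝ X)) + ((0 : X), u.2) := by simp
    rw [hh1, hh2]
    simp only [ContinuousLinearMap.comp_apply, ContinuousLinearMap.inl_apply,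
      ContinuousLinearMap.inr_apply]
    conv_lhs => rw [hu]
    rw [map_add]
  have hh1norm : ‖h1‖ ≤ σ := by
    refine ContinuousLinearMap.opNorm_le_bound _ hσpos.le fun a => ?_
    have h5 : ‖h ((a, (0:StrongDual ℝ X)) : (X × StrongDual ℝ X))‖ ≤ ‖h‖ * ‖((a, (0:StrongDual ℝ X)) : (X × StrongDual ℝ X))‖ := h.le_opNorm _
    have h6 : ‖((a, (0:StrongDual ℝ X)) : (X × StrongDual ℝ X))‖ = ‖a‖ := by
      rw [Prod.norm_def]; simp [norm_nonneg]
    rw [h6] at h5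
    simp only [hh1, ContinuousLinearMap.comp_apply, ContinuousLinearMap.inl_apply]
    calc ‖h ((a, (0:StrongDual ℝ X)) : (X × StrongDual ℝ X))‖ ≤ ‖h‖ * ‖a‖ := h5
      _ ≤ σ * ‖a‖ := mul_le_mul_of_nonneg_right hhnormle (norm_nonneg a)
  have hh2norm : ‖h2‖ ≤ σ := by
    refine ContinuousLinearMap.opNorm_le_bound _ hσpos.le fun a => ?_
    have h5 : ‖h (((0:X), a) : (X × StrongDual ℝ X))‖ ≤ ‖h‖ * ‖(((0:X), a) : (X × StrongDual ℝ X))‖ := h.le_opNorm _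
    have h6 : ‖(((0:X), a) : (X × StrongDual ℝ X))‖ = ‖a‖ := by
      rw [Prod.norm_def]; simp [norm_nonneg]
    rw [h6] at h5
    simp only [hh2, ContinuousLinearMap.comp_apply, ContinuousLinearMap.inr_apply]
    calc ‖h (((0:X), a) : (X × StrongDual ℝ X))‖ ≤ ‖h‖ * ‖a‖ := h5
      _ ≤ σ * ‖a‖ := mul_le_mul_of_nonneg_right hhnormle (norm_nonneg a)
  -- the adjoint point
  set z1 : StrongDual ℝ X := xs + h1 - bs with hz1
  set z2 : StrongDual ℝ (StrongDual ℝ X) := inclusionInDoubleDual ℝ X b - xss - h2 with hz2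
  have horth : ∀ w' ∈ S, z1 w'.1 = z2 w'.2 := by
    intro w' hw'
    have hw'T : w' ∈ T := hST hw'
    have hMe : h w' = Mfull w' := by
      have := hhext ⟨w', hw'T⟩
      simpa [hMrdef] using this
    have hMv := hMapp w'
    have hhv := happ w'
    have hz1v : z1 w'.1 = xs w'.1 + h1 w'.1 - bs w'.1 := by simp [hz1]
    have hz2v : z2 w'.2 = w'.2 b - xss w'.2 - h2 w'.2 := by simp [hz2, dual_def]
    rw [hz1v, hz2v]
    linarith [hMe.trans hMv, hhv]
  have hpos := hadj z2 z1 horth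
  -- expand and estimate
  have hexp : z2 z1 = (xs b + h1 b - bs b) - (xss xs + xss h1 - xss bs)
      - (h2 xs + h2 h1 - h2 bs) := by
    rw [hz2]
    simp only [ContinuousLinearMap.sub_apply, dual_def]
    rw [hz1]
    simp only [ContinuousLinearMap.add_apply, ContinuousLinearMap.sub_apply, map_add, map_sub]
  have hGw : xs b + xss bs - bs b ≤ Gval := by
    have h10 := hGT (w:(X × StrongDual ℝ X)) w.2
    rw [← hb, ← hbs] at h10
    linarith
  have hnb : ‖b‖ ≤ ‖(w:(X × StrongDual ℝ X))‖ := norm_fst_le (w:(X × StrongDual ℝ X))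
  have hnbs : ‖bs‖ ≤ ‖(w:(X × StrongDual ℝ X))‖ := norm_snd_le (w:(X × StrongDual ℝ X))
  have hσw : σ * ‖(w:(X × StrongDual ℝ X))‖ ≤ 2 * δ := by
    have h7 : σ * ‖(w:(X × StrongDual ℝ X))‖ ≤ σ * (N + δ * (1 + N)) :=
      mul_le_mul_of_nonneg_left hnormw hσpos.le
    have h8 : σ * (N + δ * (1 + N)) = σ * N + δ * (σ * (1+N)) := by ring
    rw [h8, hσN] at h7
    have h11 : σ * (1 + N) = σ + σ * N := by ring
    have h9 : σ * N ≤ δ := by linarith [hσN, hσpos]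
    have hδδ : δ * δ ≤ δ * 1 := mul_le_mul_of_nonneg_left hδ1 hδpos.le
    linarith
  have e1 : |h1 b| ≤ σ * ‖(w:(X × StrongDual ℝ X))‖ := by
    calc |h1 b| ≤ ‖h1‖ * ‖b‖ := by
          have := h1.le_opNorm b; rwa [Real.norm_eq_abs] at this
      _ ≤ σ * ‖(w:(X × StrongDual ℝ X))‖ := mul_le_mul hh1norm hnb (norm_nonneg b) hσpos.le
  have e2 : |xss h1| ≤ ‖xss‖ * σ := by
    calc |xss h1| ≤ ‖xss‖ * ‖h1‖ := by
          have := xss.le_opNorm h1; rwa [Real.norm_eq_abs] at this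
      _ ≤ ‖xss‖ * σ := mul_le_mul_of_nonneg_left hh1norm (norm_nonneg xss)
  have e3 : |h2 xs| ≤ σ * ‖xs‖ := by
    calc |h2 xs| ≤ ‖h2‖ * ‖xs‖ := by
          have := h2.le_opNorm xs; rwa [Real.norm_eq_abs] at this
      _ ≤ σ * ‖xs‖ := mul_le_mul_of_nonneg_right hh2norm (norm_nonneg xs)
  have e4 : |h2 h1| ≤ σ := by
    calc |h2 h1| ≤ ‖h2‖ * ‖h1‖ := by
          have := h2.le_opNorm h1; rwa [Real.norm_eq_abs] at this
      _ ≤ σ * σ := mul_le_mul hh2norm hh1norm (norm_nonneg h1) hσpos.le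
      _ ≤ σ * 1 := mul_le_mul_of_nonneg_left (le_trans hσδ hδ1) hσpos.le
      _ = σ := mul_one σ
  have e5 : |h2 bs| ≤ σ * ‖(w:(X × StrongDual ℝ X))‖ := by
    calc |h2 bs| ≤ ‖h2‖ * ‖bs‖ := by
          have := h2.le_opNorm bs; rwa [Real.norm_eq_abs] at this
      _ ≤ σ * ‖(w:(X × StrongDual ℝ X))‖ := mul_le_mul hh2norm hnbs (norm_nonneg bs) hσpos.le
  have hσ1 : σ ≤ 1 := le_trans hσδ hδ1
  have habs1 := abs_le.mp e1
  have habs2 := abs_le.mp e2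
  have habs3 := abs_le.mp e3
  have habs4 := abs_le.mp e4
  have habs5 := abs_le.mp e5
  rw [hexp] at hpos
  have p1 : σ * ‖xs‖ ≤ δ * ‖xs‖ := mul_le_mul_of_nonneg_right hσδ (norm_nonneg xs)
  have p2 : ‖xss‖ * σ ≤ ‖xss‖ * δ := mul_le_mul_of_nonneg_left hσδ (norm_nonneg xss)
  linarith

end Auxiliary

set_option maxHeartbeats 1000000 in
/-- If `A : X ⇉ X*` is a maximally monotone linear relation with monotone adjoint, then
for every `(v₀, v*₀)`,
`inf_{(x,x*)} [ι_{gra A}(v₀+x, v*₀+x*) + ⟨x,x*⟩ + ‖x‖²/2 + ‖x*‖²/2] = 0`. -/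
theorem stmt_16 {X : Type*} [NormedAddCommGroup X] [NormedSpace ℝ X] [CompleteSpace X]
    (A : X → Set (StrongDual ℝ X))
    (hlin : ∃ S : Submodule ℝ (X × StrongDual ℝ X),
      (S : Set (X × StrongDual ℝ X)) = {p : X × StrongDual ℝ X | p.2 ∈ A p.1})
    (hmono : ∀ p ∈ {p : X × StrongDual ℝ X | p.2 ∈ A p.1},
      ∀ q ∈ {p : X × StrongDual ℝ X | p.2 ∈ A p.1}, 0 ≤ (p.2 - q.2) (p.1 - q.1))
    (hmax : ∀ p : X × StrongDual ℝ X,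
      (∀ q ∈ {p : X × StrongDual ℝ X | p.2 ∈ A p.1}, 0 ≤ (p.2 - q.2) (p.1 - q.1)) → p.2 ∈ A p.1)
    (hadjmono : ∀ q : StrongDual ℝ (StrongDual ℝ X) × StrongDual ℝ X,
      (∀ p ∈ {p : X × StrongDual ℝ X | p.2 ∈ A p.1}, q.2 p.1 = q.1 p.2) → 0 ≤ q.1 q.2) :
    ∀ (v₀ : X) (v'₀ : StrongDual ℝ X),
      (⨅ p : X × StrongDual ℝ X,
        (if v'₀ + p.2 ∈ A (v₀ + p.1) then
          ((p.2 p.1 + ‖p.1‖ ^ 2 / 2 + ‖p.2‖ ^ 2 / 2 : ℝ) : EReal) else ⊤)) = 0 := by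
  intro v₀ v'₀
  obtain ⟨S, hS⟩ := hlin
  have hmem : ∀ p : X × StrongDual ℝ X, p ∈ S ↔ p.2 ∈ A p.1 := fun p => Set.ext_iff.mp hS p
  have hψ0 : ∀ p : X × StrongDual ℝ X, (0:ℝ) ≤ p.2 p.1 + ‖p.1‖ ^ 2 / 2 + ‖p.2‖ ^ 2 / 2 := by
    intro p
    have h1 : |p.2 p.1| ≤ ‖p.2‖ * ‖p.1‖ := by
      have := p.2.le_opNorm p.1; rwa [Real.norm_eq_abs] at this
    have h2 := abs_le.mp h1
    nlinarith [sq_nonneg (‖p.1‖ - ‖p.2‖)]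
  -- lower bound
  refine le_antisymm ?hub ?hlb
  case hlb =>
    refine le_iInf fun p => ?_
    split_ifs with h
    · have := hψ0 p
      exact_mod_cast this
    · exact le_top
  -- upper bound
  case hub =>
    set ψ : X × StrongDual ℝ X → ℝ := fun p => p.2 p.1 + ‖p.1‖ ^ 2 / 2 + ‖p.2‖ ^ 2 / 2 with hψ
    set Dset : Set ℝ := ψ '' {p : X × StrongDual ℝ X | (v₀ + p.1, v'₀ + p.2) ∈ S} with hDset
    have hDne : Dset.Nonempty := by
      refine ⟨ψ (-v₀, -v'₀), (-v₀, -v'₀), ?_, rfl⟩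
      simp only [Set.mem_setOf_eq, add_neg_cancel]
      exact S.zero_mem
    have hDbdd : BddBelow Dset := by
      refine ⟨0, ?_⟩
      rintro r ⟨p, _, rfl⟩
      exact hψ0 p
    set α := sInf Dset with hα
    have hα0 : 0 ≤ α := le_csInf hDne (by rintro r ⟨p, _, rfl⟩; exact hψ0 p)
    -- THE KEY CLAIM
    have hkey : α ≤ 0 := by
      have hmonoS : ∀ z z' : X × StrongDual ℝ X, (v₀ + z.1, v'₀ + z.2) ∈ S →
          (v₀ + z'.1, v'₀ + z'.2) ∈ S →
          0 ≤ z.2 z.1 - z.2 z'.1 - z'.2 z.1 + z'.2 z'.1 := by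
        intro z z' hz hz'
        have h0 := hmono _ ((hmem _).mp hz) _ ((hmem _).mp hz')
        simp only at h0
        have hd : (v₀ + z.1) - (v₀ + z'.1) = z.1 - z'.1 := by abel
        have hd2 : (v'₀ + z.2) - (v'₀ + z'.2) = z.2 - z'.2 := by abel
        rw [hd, hd2, ContinuousLinearMap.sub_apply, map_sub, map_sub] at h0
        linarith
      -- the two convex sets
      set Oset : Set ((X × StrongDual ℝ X) × ℝ) :=
        {y | y.2 + (‖y.1.1‖ ^ 2 / 2 + ‖y.1.2‖ ^ 2 / 2) < α} with hOset
      set Cset : Set ((X × StrongDual ℝ X) × ℝ) :=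
        {y | (v₀ + y.1.1, v'₀ + y.1.2) ∈ S ∧ y.1.2 y.1.1 ≤ y.2} with hCset
      have hOopen : IsOpen Oset := by
        have hcont : Continuous (fun y : (X × StrongDual ℝ X) × ℝ =>
            y.2 + (‖y.1.1‖ ^ 2 / 2 + ‖y.1.2‖ ^ 2 / 2)) := by
          refine continuous_snd.add (Continuous.add ?_ ?_)
          · exact ((continuous_fst.fst.norm).pow 2).div_const 2
          · exact ((continuous_fst.snd.norm).pow 2).div_const 2
        exact isOpen_lt hcont continuous_const
      have hsq : ∀ a b A B : ℝ, 0 ≤ a → 0 ≤ b → a + b = 1 → 0 ≤ A → 0 ≤ B →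
          (a * A + b * B) ^ 2 ≤ a * A ^ 2 + b * B ^ 2 := by
        intro a b A B ha hb hab hA hB
        nlinarith [sq_nonneg (A - B), mul_nonneg ha hb]
      have hnormconv : ∀ (Y : Type _) [NormedAddCommGroup Y] [NormedSpace ℝ Y],
          ∀ (a b : ℝ) (y y' : Y), 0 ≤ a → 0 ≤ b → a + b = 1 →
          ‖a • y + b • y'‖ ^ 2 / 2 ≤ a * (‖y‖ ^ 2 / 2) + b * (‖y'‖ ^ 2 / 2) := by
        intro Y _ _ a b y y' ha hb hab
        have h1 : ‖a • y + b • y'‖ ≤ a * ‖y‖ + b * ‖y'‖ := by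
          calc ‖a • y + b • y'‖ ≤ ‖a • y‖ + ‖b • y'‖ := norm_add_le _ _
            _ = a * ‖y‖ + b * ‖y'‖ := by
                rw [norm_smul, norm_smul, Real.norm_eq_abs, Real.norm_eq_abs,
                  abs_of_nonneg ha, abs_of_nonneg hb]
        have h2 : ‖a • y + b • y'‖ ^ 2 ≤ (a * ‖y‖ + b * ‖y'‖) ^ 2 := by
          have := norm_nonneg (a • y + b • y')
          nlinarith
        have h3 := hsq a b ‖y‖ ‖y'‖ ha hb hab (norm_nonneg y) (norm_nonneg y')
        nlinarith
      have hOconv : Convex ℝ Oset := by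
        intro y hy y' hy' a b ha hb hab
        simp only [hOset, Set.mem_setOf_eq] at hy hy' ⊢
        have hJ1 := hnormconv X a b y.1.1 y'.1.1 ha hb hab
        have hJ2 := hnormconv (StrongDual ℝ X) a b y.1.2 y'.1.2 ha hb hab
        have hcomb : a * (y.2 + (‖y.1.1‖ ^ 2 / 2 + ‖y.1.2‖ ^ 2 / 2))
            + b * (y'.2 + (‖y'.1.1‖ ^ 2 / 2 + ‖y'.1.2‖ ^ 2 / 2)) < α := by
          rcases eq_or_lt_of_le ha with ha' | ha'
          · rw [← ha']
            have hb1 : b = 1 := by linarith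
            rw [hb1]; simpa using hy'
          · rcases eq_or_lt_of_le hb with hb' | hb'
            · rw [← hb']
              have ha1 : a = 1 := by linarith
              rw [ha1]; simpa using hy
            · have l1 : a * (y.2 + (‖y.1.1‖ ^ 2 / 2 + ‖y.1.2‖ ^ 2 / 2)) < a * α :=
                mul_lt_mul_of_pos_left hy ha'
              have l2 : b * (y'.2 + (‖y'.1.1‖ ^ 2 / 2 + ‖y'.1.2‖ ^ 2 / 2)) < b * α :=
                mul_lt_mul_of_pos_left hy' hb'
              have : a * α + b * α = α := by rw [← add_mul, hab, one_mul]
              linarith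
        have hfst : (a • y + b • y').1.1 = a • y.1.1 + b • y'.1.1 := rfl
        have hsnd : (a • y + b • y').1.2 = a • y.1.2 + b • y'.1.2 := rfl
        have hr : (a • y + b • y').2 = a * y.2 + b * y'.2 := rfl
        rw [hfst, hsnd, hr]
        linarith
      have hCconv : Convex ℝ Cset := by
        intro y hy y' hy' a b ha hb hab
        simp only [hCset, Set.mem_setOf_eq] at hy hy' ⊢
        have hfst : (a • y + b • y').1.1 = a • y.1.1 + b • y'.1.1 := rfl
        have hsnd : (a • y + b • y').1.2 = a • y.1.2 + b • y'.1.2 := rfl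
        have hr : (a • y + b • y').2 = a * y.2 + b * y'.2 := rfl
        constructor
        · rw [hfst, hsnd]
          have hxeq : ((v₀ + (a • y.1.1 + b • y'.1.1), v'₀ + (a • y.1.2 + b • y'.1.2))
              : X × StrongDual ℝ X)
              = a • (v₀ + y.1.1, v'₀ + y.1.2) + b • (v₀ + y'.1.1, v'₀ + y'.1.2) := by
            have e1 : a • (v₀ + y.1.1) + b • (v₀ + y'.1.1)
                = (a + b) • v₀ + (a • y.1.1 + b • y'.1.1) := by
              rw [smul_add, smul_add, add_smul]; abel
            have e2 : a • (v'₀ + y.1.2) + b • (v'₀ + y'.1.2)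
                = (a + b) • v'₀ + (a • y.1.2 + b • y'.1.2) := by
              rw [smul_add, smul_add, add_smul]; abel
            apply Prod.ext
            · simp only [Prod.fst_add, Prod.smul_fst]
              rw [e1, hab, one_smul]
            · simp only [Prod.snd_add, Prod.smul_snd]
              rw [e2, hab, one_smul]
          rw [hxeq]
          exact S.add_mem (S.smul_mem a hy.1) (S.smul_mem b hy'.1)
        · rw [hfst, hsnd, hr]
          have hcross := hmonoS y.1 y'.1 hy.1 hy'.1
          have hexpand : (a • y.1.2 + b • y'.1.2) (a • y.1.1 + b • y'.1.1)
              = a * a * (y.1.2 y.1.1) + a * b * (y.1.2 y'.1.1)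
                + b * a * (y'.1.2 y.1.1) + b * b * (y'.1.2 y'.1.1) := by
            rw [ContinuousLinearMap.add_apply]
            simp only [ContinuousLinearMap.smul_apply, map_add, map_smul, smul_eq_mul]
            ring
          rw [hexpand]
          have hab0 : 0 ≤ a * b := mul_nonneg ha hb
          have s1 : a * b * (y.1.2 y'.1.1 + y'.1.2 y.1.1)
              ≤ a * b * (y.1.2 y.1.1 + y'.1.2 y'.1.1) :=
            mul_le_mul_of_nonneg_left (by linarith [hcross]) hab0
          have s2 : a * a * y.1.2 y.1.1 + a * b * y.1.2 y.1.1
              + a * b * y'.1.2 y'.1.1 + b * b * y'.1.2 y'.1.1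
              = a * y.1.2 y.1.1 + b * y'.1.2 y'.1.1 := by
            linear_combination (a * y.1.2 y.1.1 + b * y'.1.2 y'.1.1) * hab
          have s3 : a * y.1.2 y.1.1 ≤ a * y.2 := mul_le_mul_of_nonneg_left hy.2 ha
          have s4 : b * y'.1.2 y'.1.1 ≤ b * y'.2 := mul_le_mul_of_nonneg_left hy'.2 hb
          linarith
      have hdisj : Disjoint Oset Cset := by
        rw [Set.disjoint_left]
        rintro y hyO ⟨hyS, hyQ⟩
        simp only [hOset, Set.mem_setOf_eq] at hyO
        have hαle : α ≤ y.1.2 y.1.1 + ‖y.1.1‖ ^ 2 / 2 + ‖y.1.2‖ ^ 2 / 2 :=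
          csInf_le hDbdd ⟨y.1, hyS, rfl⟩
        linarith
      obtain ⟨fl, u, hfO, hfC⟩ := geometric_hahn_banach_open hOconv hOopen hCconv hdisj
      set c : ℝ := fl (0, 1) with hc
      have hflin : ∀ (z : X × StrongDual ℝ X) (r : ℝ), fl (z, r) = fl (z, 0) + r * c := by
        intro z r
        have : ((z, r) : (X × StrongDual ℝ X) × ℝ) = (z, 0) + r • ((0 : X × StrongDual ℝ X), (1:ℝ)) := by
          apply Prod.ext
          · simp
          · simp
        rw [this, map_add, map_smul, smul_eq_mul]
      have hOmem : ∀ (z : X × StrongDual ℝ X) (r : ℝ),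
          r < α - (‖z.1‖ ^ 2 / 2 + ‖z.2‖ ^ 2 / 2) → fl (z, 0) + r * c < u := by
        intro z r hr
        have hmem' : ((z, r) : (X × StrongDual ℝ X) × ℝ) ∈ Oset := by
          simp only [hOset, Set.mem_setOf_eq]
          linarith
        have := hfO _ hmem'
        rwa [hflin] at this
      have hCmem : ∀ p : X × StrongDual ℝ X, (v₀ + p.1, v'₀ + p.2) ∈ S →
          u ≤ fl (p, 0) + (p.2 p.1) * c := by
        intro p hp
        have hmem' : ((p, p.2 p.1) : (X × StrongDual ℝ X) × ℝ) ∈ Cset := ⟨hp, le_refl _⟩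
        have := hfC _ hmem'
        rwa [hflin] at this
      have hc0 : 0 ≤ c := by
        by_contra hcneg
        rw [not_le] at hcneg
        set r : ℝ := min (α - 1) ((u + 1) / c) with hrdef
        have h1 : r < α - (‖(0:X × StrongDual ℝ X).1‖ ^ 2 / 2 + ‖(0:X × StrongDual ℝ X).2‖ ^ 2 / 2) := by
          have : r ≤ α - 1 := min_le_left _ _
          simp only [Prod.fst_zero, Prod.snd_zero, norm_zero]
          norm_num
          linarith
        have h2 := hOmem 0 r h1
        have h3 : fl ((0 : X × StrongDual ℝ X), (0:ℝ)) = 0 := by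
          have : ((0 : X × StrongDual ℝ X), (0:ℝ)) = (0 : (X × StrongDual ℝ X) × ℝ) := rfl
          rw [this, map_zero]
        rw [h3, zero_add] at h2
        have h4 : r ≤ (u + 1) / c := min_le_right _ _
        have h5 : (u + 1) / c * c = u + 1 := div_mul_cancel₀ _ (ne_of_lt hcneg)
        have h6 : r * c ≥ (u + 1) / c * c := by
          exact mul_le_mul_of_nonpos_right h4 hcneg.le
        rw [h5] at h6
        linarith
      have hcne : c ≠ 0 := by
        intro hc0'
        have hall : ∀ z : X × StrongDual ℝ X, fl (z, 0) < u := by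
          intro z
          have := hOmem z (α - (‖z.1‖ ^ 2 / 2 + ‖z.2‖ ^ 2 / 2) - 1) (by linarith)
          rw [hc0', mul_zero, add_zero] at this
          exact this
        have hzero : ∀ z : X × StrongDual ℝ X, fl (z, 0) ≤ 0 := by
          intro z
          by_contra hpos
          rw [not_le] at hpos
          set t : ℝ := (u + 1) / fl (z, 0) with ht
          have htpos : 0 < t ∨ t ≤ 0 := lt_or_ge 0 t |>.imp id id
          have h7 : fl (t • z, 0) = t * fl (z, 0) := by
            have : ((t • z, (0:ℝ)) : (X × StrongDual ℝ X) × ℝ) = t • ((z, 0) : (X × StrongDual ℝ X) × ℝ) := by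
              apply Prod.ext
              · rfl
              · simp
            rw [this, map_smul, smul_eq_mul]
          have h8 : t * fl (z, 0) = u + 1 := div_mul_cancel₀ _ (ne_of_gt hpos)
          have h9 := hall (t • z)
          rw [h7, h8] at h9
          linarith
        have hC0 : u ≤ fl (((-v₀, -v'₀) : X × StrongDual ℝ X), 0) := by
          have h10 := hCmem (-v₀, -v'₀) (by simp only [add_neg_cancel]; exact S.zero_mem)
          rw [hc0', mul_zero, add_zero] at h10
          exact h10
        have h11 := hzero (-v₀, -v'₀)
        have h12 := hall 0
        have h13 : fl ((0 : X × StrongDual ℝ X), (0:ℝ)) = 0 := by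
          have : ((0 : X × StrongDual ℝ X), (0:ℝ)) = (0 : (X × StrongDual ℝ X) × ℝ) := rfl
          rw [this, map_zero]
        rw [h13] at h12
        linarith
      have hcpos : 0 < c := lt_of_le_of_ne hc0 (Ne.symm hcne)
      -- sup form of O inequality
      have hO1 : ∀ z : X × StrongDual ℝ X,
          fl (z, 0) + (α - (‖z.1‖ ^ 2 / 2 + ‖z.2‖ ^ 2 / 2)) * c ≤ u := by
        intro z
        by_contra hcon
        rw [not_le] at hcon
        set β : ℝ := α - (‖z.1‖ ^ 2 / 2 + ‖z.2‖ ^ 2 / 2) with hβ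
        set η : ℝ := (fl (z, 0) + β * c - u) / c with hη
        have hηpos : 0 < η := div_pos (by linarith) hcpos
        have := hOmem z (β - η) (by rw [hβ] at *; linarith)
        have hexp : fl (z, 0) + (β - η) * c = u := by
          have hηc : η * c = fl (z, 0) + β * c - u := div_mul_cancel₀ _ hcne
          have : (β - η) * c = β * c - η * c := by ring
          rw [this, hηc]; ring
        linarith
      -- the dual functionals
      set gl : (X × StrongDual ℝ X) →L[ℝ] ℝ :=
        c⁻¹ • (fl.comp (ContinuousLinearMap.inl ℝ (X × StrongDual ℝ X) ℝ)) with hgl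
      have hglapp : ∀ z : X × StrongDual ℝ X, gl z = c⁻¹ * fl (z, 0) := by
        intro z
        rw [hgl]
        simp only [ContinuousLinearMap.smul_apply, ContinuousLinearMap.comp_apply,
          ContinuousLinearMap.inl_apply, smul_eq_mul]
      set g1 : StrongDual ℝ X := gl.comp (ContinuousLinearMap.inl ℝ X (StrongDual ℝ X)) with hg1
      set g2 : StrongDual ℝ (StrongDual ℝ X) := gl.comp (ContinuousLinearMap.inr ℝ X (StrongDual ℝ X)) with hg2
      have hgsum : ∀ z : X × StrongDual ℝ X, gl z = g1 z.1 + g2 z.2 := by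
        intro z
        have hz : z = (z.1, (0 : StrongDual ℝ X)) + ((0 : X), z.2) := by simp
        rw [hg1, hg2]
        simp only [ContinuousLinearMap.comp_apply, ContinuousLinearMap.inl_apply,
          ContinuousLinearMap.inr_apply]
        conv_lhs => rw [hz]
        rw [map_add]
      set u' : ℝ := u / c with hu'
      have hO2 : ∀ z : X × StrongDual ℝ X, gl z + α - (‖z.1‖ ^ 2 / 2 + ‖z.2‖ ^ 2 / 2) ≤ u' := by
        intro z
        have h1 := hO1 z
        have h2 : c⁻¹ * (fl (z, 0) + (α - (‖z.1‖ ^ 2 / 2 + ‖z.2‖ ^ 2 / 2)) * c) ≤ c⁻¹ * u :=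
          mul_le_mul_of_nonneg_left h1 (by positivity)
        have h3 : c⁻¹ * (fl (z, 0) + (α - (‖z.1‖ ^ 2 / 2 + ‖z.2‖ ^ 2 / 2)) * c)
            = c⁻¹ * fl (z, 0) + (α - (‖z.1‖ ^ 2 / 2 + ‖z.2‖ ^ 2 / 2)) := by
          field_simp
        rw [h3] at h2
        rw [hglapp]
        have h4 : u' = c⁻¹ * u := by rw [hu', div_eq_inv_mul]
        rw [h4]
        linarith
      have hC2 : ∀ p : X × StrongDual ℝ X, (v₀ + p.1, v'₀ + p.2) ∈ S →
          u' ≤ gl p + p.2 p.1 := by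
        intro p hp
        have h1 := hCmem p hp
        have h2 : c⁻¹ * u ≤ c⁻¹ * (fl (p, 0) + (p.2 p.1) * c) :=
          mul_le_mul_of_nonneg_left h1 (by positivity)
        have h3 : c⁻¹ * (fl (p, 0) + (p.2 p.1) * c) = c⁻¹ * fl (p, 0) + p.2 p.1 := by
          field_simp
        rw [h3] at h2
        rw [hglapp]
        have h4 : u' = c⁻¹ * u := by rw [hu', div_eq_inv_mul]
        rw [h4]
        linarith
      -- bound α via approximate norming elements
      have hαbound : α ≤ u' - ‖g1‖ ^ 2 / 2 - ‖g2‖ ^ 2 / 2 := by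
        refine le_of_forall_pos_le_add fun ε hε => ?_
        obtain ⟨y1, hy1⟩ := my_norming g1 (show (0:ℝ) < ε/2 by linarith)
        obtain ⟨y2, hy2⟩ := my_norming g2 (show (0:ℝ) < ε/2 by linarith)
        have h1 := hO2 (y1, y2)
        rw [hgsum] at h1
        simp only at h1
        linarith
      -- apply the core lemma
      set xsd : StrongDual ℝ X := v'₀ - g1 with hxsd
      set xssd : StrongDual ℝ (StrongDual ℝ X) := inclusionInDoubleDual ℝ X v₀ - g2 with hxssd
      set Gval : ℝ := v'₀ v₀ - g1 v₀ - g2 v'₀ - u' with hGval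
      have hG : ∀ w ∈ S, xsd w.1 + xssd w.2 - w.2 w.1 ≤ Gval := by
        intro w hw
        have hmem' : (v₀ + (w.1 - v₀), v'₀ + (w.2 - v'₀)) ∈ S := by
          simpa using hw
        have h1 := hC2 (w.1 - v₀, w.2 - v'₀) hmem'
        rw [hgsum] at h1
        simp only [map_sub, ContinuousLinearMap.sub_apply] at h1
        rw [hxsd, hxssd, hGval]
        simp only [ContinuousLinearMap.sub_apply, dual_def]
        linarith
      have hadj' : ∀ (z2 : StrongDual ℝ (StrongDual ℝ X)) (z1 : StrongDual ℝ X),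
          (∀ w ∈ S, z1 w.1 = z2 w.2) → 0 ≤ z2 z1 := by
        intro z2 z1 hw
        exact hadjmono (z2, z1) (fun p hp => hw p ((hmem p).mpr hp))
      have hcore := my_core S hadj' xsd xssd Gval hG
      have hexpand : xssd xsd = v'₀ v₀ - g1 v₀ - g2 v'₀ + g2 g1 := by
        rw [hxssd, hxsd]
        simp only [ContinuousLinearMap.sub_apply, map_sub, dual_def]
        ring
      rw [hexpand, hGval] at hcore
      -- so g2 g1 ≤ -u'
      have hg2g1 : u' ≤ - g2 g1 := by linarith
      have habs : |g2 g1| ≤ ‖g2‖ * ‖g1‖ := by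
        have := g2.le_opNorm g1; rwa [Real.norm_eq_abs] at this
      have h2 := abs_le.mp habs
      nlinarith [sq_nonneg (‖g1‖ - ‖g2‖)]
    -- conclude
    by_contra hI
    rw [not_le] at hI
    obtain ⟨z, hz0, hzI⟩ := EReal.exists_between_coe_real hI
    have hz0' : (0:ℝ) < z := by exact_mod_cast hz0
    obtain ⟨r, ⟨p, hpS, rfl⟩, hr⟩ := Real.lt_sInf_add_pos hDne hz0'
    have hrz : ψ p < z := by rw [← hα] at hr; linarith
    have hcond : v'₀ + p.2 ∈ A (v₀ + p.1) := (hmem _).mp hpS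
    have hle : (⨅ p : X × StrongDual ℝ X,
        (if v'₀ + p.2 ∈ A (v₀ + p.1) then
          ((p.2 p.1 + ‖p.1‖ ^ 2 / 2 + ‖p.2‖ ^ 2 / 2 : ℝ) : EReal) else ⊤)) ≤ ((ψ p : ℝ) : EReal) := by
      refine iInf_le_of_le p ?_
      rw [if_pos hcond]
    have : ((ψ p : ℝ) : EReal) < ((z : ℝ) : EReal) := by exact_mod_cast hrz
    exact absurd (lt_of_le_of_lt hle (lt_of_lt_of_le this hzI.le)) (lt_irrefl _)
end

section
/- Let A : X ⇉ X* be a maximally monotone linear relation of type (FP). Then A* is monotone: ⟨x**₀, x*₀⟩ ≥ 0 for every (x**₀, x*₀) ∈ gra A*. -/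
open NormedSpace

/-- If a maximally monotone linear relation `A : X ⇉ X*` is of type (FP), then its
adjoint `A*` is monotone: `⟨x**₀, x*₀⟩ ≥ 0` for every `(x**₀, x*₀) ∈ gra A*`. -/
theorem stmt_18 {X : Type*} [NormedAddCommGroup X] [NormedSpace ℝ X] [CompleteSpace X]
    (A : X → Set (StrongDual ℝ X))
    (hlin : ∃ S : Submodule ℝ (X × StrongDual ℝ X),
      (S : Set (X × StrongDual ℝ X)) = {p : X × StrongDual ℝ X | p.2 ∈ A p.1})
    (hmono : ∀ p ∈ {p : X × StrongDual ℝ X | p.2 ∈ A p.1},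
      ∀ q ∈ {p : X × StrongDual ℝ X | p.2 ∈ A p.1}, 0 ≤ (p.2 - q.2) (p.1 - q.1))
    (hmax : ∀ p : X × StrongDual ℝ X,
      (∀ q ∈ {p : X × StrongDual ℝ X | p.2 ∈ A p.1}, 0 ≤ (p.2 - q.2) (p.1 - q.1)) → p.2 ∈ A p.1)
    (hFP : ∀ U : Set (StrongDual ℝ X), IsOpen U → Convex ℝ U →
      (∃ y' ∈ U, ∃ y : X, y' ∈ A y) →
      ∀ (x : X) (x' : StrongDual ℝ X), x' ∈ U →
        (∀ q ∈ {p : X × StrongDual ℝ X | p.2 ∈ A p.1}, q.2 ∈ U → 0 ≤ (x' - q.2) (x - q.1)) →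
        x' ∈ A x) :
    ∀ q : StrongDual ℝ (StrongDual ℝ X) × StrongDual ℝ X,
      (∀ p ∈ {p : X × StrongDual ℝ X | p.2 ∈ A p.1}, q.2 p.1 = q.1 p.2) → 0 ≤ q.1 q.2 := by
  rintro ⟨xss, xs⟩ hq
  obtain ⟨S, hS⟩ := hlin
  -- (0,0) ∈ gra A
  have hzero : (0 : StrongDual ℝ X) ∈ A (0 : X) := by
    have : ((0 : X), (0 : StrongDual ℝ X)) ∈ (S : Set (X × StrongDual ℝ X)) := S.zero_mem
    rw [hS] at this; exact this
  -- every (y, y*) ∈ gra A satisfies y*(y) ≥ 0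
  have hpos : ∀ p ∈ {p : X × StrongDual ℝ X | p.2 ∈ A p.1}, 0 ≤ p.2 p.1 := by
    intro p hp
    have := hmono p hp (0, 0) hzero
    simpa using this
  by_contra hneg
  push_neg at hneg
  -- In either case below, we show xs ∈ A 0, whence xss xs = xs 0 = 0, contradiction.
  have key : xs ∈ A (0 : X) := by
    by_cases hvan : ∀ p ∈ {p : X × StrongDual ℝ X | p.2 ∈ A p.1}, xs p.1 = 0
    · -- xs vanishes on dom A: (0, xs) monotonically related to all of gra A
      apply hmax ((0 : X), xs)
      intro p hp
      have h1 : xs p.1 = 0 := hvan p hp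
      have h2 : 0 ≤ p.2 p.1 := hpos p hp
      simp only [map_sub, ContinuousLinearMap.sub_apply, map_zero]
      linarith
    · -- xs does not vanish on dom A
      push_neg at hvan
      obtain ⟨a, ha, hane⟩ := hvan
      set U : Set (StrongDual ℝ X) := {ys | xss ys < 0} with hU
      have hUopen : IsOpen U := by
        have : U = xss ⁻¹' Set.Iio 0 := rfl
        rw [this]
        exact IsOpen.preimage xss.continuous isOpen_Iio
      have hUconvex : Convex ℝ U := by
        have : U = xss ⁻¹' Set.Iio 0 := rfl
        rw [this]
        exact (convex_Iio (0 : ℝ)).linear_preimage xss.toLinearMap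
      -- U ∩ ran A ≠ ∅: scale a by t = -xs(a.1)
      have hran : ∃ y' ∈ U, ∃ y : X, y' ∈ A y := by
        set t : ℝ := -(xs a.1) with ht
        have hmemS : a ∈ (S : Set (X × StrongDual ℝ X)) := by rw [hS]; exact ha
        have hsmul : (t • a) ∈ (S : Set (X × StrongDual ℝ X)) := S.smul_mem t hmemS
        have hsmul' : (t • a) ∈ {p : X × StrongDual ℝ X | p.2 ∈ A p.1} := by rwa [hS] at hsmul
        refine ⟨(t • a).2, ?_, (t • a).1, hsmul'⟩
        have heq : xs ((t • a).1) = xss ((t • a).2) := hq _ hsmul'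
        have h1 : xs ((t • a).1) = t * xs a.1 := by
          simp [Prod.smul_fst, map_smul, smul_eq_mul]
        have : xss ((t • a).2) = -(xs a.1) * xs a.1 := by rw [← heq, h1, ht]
        show xss ((t • a).2) < 0
        rw [this]
        nlinarith [mul_self_pos.mpr hane]
      have hxsU : xs ∈ U := hneg
      apply hFP U hUopen hUconvex hran 0 xs hxsU
      intro p hp hpU
      have heq : xs p.1 = xss p.2 := hq p hp
      have h2 : 0 ≤ p.2 p.1 := hpos p hp
      have h3 : xss p.2 < 0 := hpU
      simp only [map_sub, ContinuousLinearMap.sub_apply, map_zero]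
      linarith
  -- conclude
  have : xs (0 : X) = xss xs := hq ((0 : X), xs) key
  simp at this
  rw [← this] at hneg
  exact lt_irrefl 0 hneg
end
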